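/- arXiv:1312.1421 — 9 statements merged into one kernel-verified Lean document; each statement's English description precedes it below -/
import Mathlib

section
/- Let 𝒳 = {1,…,n} and let P = (p_1,…,p_n) and Q = (q_1,…,q_n) be probability mass functions on 𝒳 with q_j > 0 for all j. Let ρ ∈ (0,1) and let c* > 0 satisfy c*·Σ_{j=1}^{n} p_j q_j/(c* q_j + p_j) = ρ. Then the partial divergence satisfies d_ρ(P‖Q) = D(P‖Q) − Σ_{j=1}^{n} p_j log(c* + p_j/q_j) + ρ log c* + h(ρ). -/
/-- A probability mass function on a finite alphabet. -/
def IsPMF {X : Type*} [Fintype X] (P : X → ℝ) : Prop :=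
  (∀ x, 0 ≤ P x) ∧ ∑ x, P x = 1

/-- Kullback–Leibler divergence (natural logarithm, with the convention
`0 · log (0/q) = 0`, which is automatic here since `0 * r = 0`). -/
noncomputable def KLdiv {X : Type*} [Fintype X] (P Q : X → ℝ) : ℝ :=
  ∑ x, P x * Real.log (P x / Q x)

/-- Partial divergence between `P` and `Q` with mismatch ratio `ρ`. -/
noncomputable def partialDiv {X : Type*} [Fintype X] (ρ : ℝ) (P Q : X → ℝ) : ℝ :=
  sInf { v : ℝ | ∃ P₁ P₂ : X → ℝ, IsPMF P₁ ∧ IsPMF P₂ ∧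
    (∀ x, ρ * P₁ x + (1 - ρ) * P₂ x = P x) ∧
    v = ρ * KLdiv P₁ Q + (1 - ρ) * KLdiv P₂ P }

/-- Binary entropy function (natural logarithm). -/
noncomputable def binEnt (p : ℝ) : ℝ :=
  -(p * Real.log p) - (1 - p) * Real.log (1 - p)

private lemma gibbs_term (a b : ℝ) (ha : 0 ≤ a) (hb : 0 ≤ b) (hab : a ≠ 0 → 0 < b) :
    a - b ≤ a * Real.log (a / b) := by
  rcases eq_or_lt_of_le ha with h | h
  · simp [← h]; linarith
  · have hb' := hab h.ne'
    have hlog : Real.log (b / a) ≤ b / a - 1 :=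
      Real.log_le_sub_one_of_pos (by positivity)
    have hneg : Real.log (a / b) = - Real.log (b / a) := by
      rw [← Real.log_inv]; congr 1; field_simp
    have hba : a * (b / a) = b := by field_simp
    nlinarith [mul_le_mul_of_nonneg_left hlog h.le]

/-- Explicit expression for the partial divergence: if `c* > 0` solves
`c* · Σ_j p_j q_j/(c* q_j + p_j) = ρ`, then
`d_ρ(P‖Q) = D(P‖Q) − Σ_j p_j log(c* + p_j/q_j) + ρ log c* + h(ρ)`. -/
theorem partialDiv_explicit (n : ℕ) (p q : Fin n → ℝ)
    (hp : IsPMF p) (hq : IsPMF q) (hqpos : ∀ j, 0 < q j)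
    (ρ : ℝ) (hρ : ρ ∈ Set.Ioo (0 : ℝ) 1)
    (c : ℝ) (hc : 0 < c)
    (hceq : c * ∑ j, p j * q j / (c * q j + p j) = ρ) :
    partialDiv ρ p q =
      KLdiv p q - (∑ j, p j * Real.log (c + p j / q j)) + ρ * Real.log c + binEnt ρ := by
  obtain ⟨hρ0, hρ1⟩ := hρ
  have hρ1' : (0:ℝ) < 1 - ρ := by linarith
  have hden : ∀ j, 0 < c * q j + p j := fun j => by nlinarith [hqpos j, hp.1 j]
  set P1 : Fin n → ℝ := fun j => c * (p j * q j / (c * q j + p j)) / ρ with hP1def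
  set P2 : Fin n → ℝ := fun j => p j * p j / (c * q j + p j) / (1 - ρ) with hP2def
  have hP1nn : ∀ j, 0 ≤ P1 j := fun j =>
    div_nonneg (mul_nonneg hc.le (div_nonneg (mul_nonneg (hp.1 j) (hqpos j).le) (hden j).le))
      hρ0.le
  have hP2nn : ∀ j, 0 ≤ P2 j := fun j =>
    div_nonneg (div_nonneg (mul_nonneg (hp.1 j) (hp.1 j)) (hden j).le) hρ1'.le
  have hsum1 : ∑ j, P1 j = 1 := by
    have h1 : ∑ j, P1 j = (c * ∑ j, p j * q j / (c * q j + p j)) / ρ := by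
      rw [Finset.mul_sum, ← Finset.sum_div]
    rw [h1, hceq, div_self hρ0.ne']
  have hsum2 : ∑ j, P2 j = 1 := by
    have hkey2 : ∀ j, p j * p j / (c * q j + p j) = p j - c * (p j * q j / (c * q j + p j)) := by
      intro j
      have hd := (hden j).ne'
      field_simp
      ring
    have h1 : ∑ j, P2 j = (∑ j, p j * p j / (c * q j + p j)) / (1 - ρ) := by
      rw [← Finset.sum_div]
    rw [h1]
    have h2 : ∑ j, p j * p j / (c * q j + p j) = 1 - ρ := by
      calc ∑ j, p j * p j / (c * q j + p j)
          = ∑ j, (p j - c * (p j * q j / (c * q j + p j))) := by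
            exact Finset.sum_congr rfl fun j _ => hkey2 j
        _ = (∑ j, p j) - c * ∑ j, p j * q j / (c * q j + p j) := by
            rw [Finset.sum_sub_distrib, Finset.mul_sum]
        _ = 1 - ρ := by rw [hp.2, hceq]
    rw [h2, div_self hρ1'.ne']
  have hcons : ∀ j, ρ * P1 j + (1 - ρ) * P2 j = p j := by
    intro j
    have hd := (hden j).ne'
    simp only [hP1def, hP2def]
    field_simp
  -- the common value
  set Tv : ℝ := (∑ j, p j * Real.log (p j / (c * q j + p j))) + ρ * Real.log c + binEnt ρ
    with hTv
  -- key decomposition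
  have hkey : ∀ A₁ A₂ : Fin n → ℝ, IsPMF A₁ → IsPMF A₂ →
      (∀ x, ρ * A₁ x + (1 - ρ) * A₂ x = p x) →
      ρ * KLdiv A₁ q + (1 - ρ) * KLdiv A₂ p =
        (∑ j, (ρ * (A₁ j * Real.log (A₁ j / P1 j))
          + (1 - ρ) * (A₂ j * Real.log (A₂ j / P2 j)))) + Tv := by
    intro A₁ A₂ hA₁ hA₂ hA
    have hpoint : ∀ j, ρ * (A₁ j * Real.log (A₁ j / q j))
        + (1 - ρ) * (A₂ j * Real.log (A₂ j / p j)) =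
        ρ * (A₁ j * Real.log (A₁ j / P1 j)) + (1 - ρ) * (A₂ j * Real.log (A₂ j / P2 j))
        + p j * Real.log (p j / (c * q j + p j))
        + (ρ * Real.log c - ρ * Real.log ρ) * A₁ j
        + (-(1 - ρ) * Real.log (1 - ρ)) * A₂ j := by
      intro j
      rcases eq_or_lt_of_le (hp.1 j) with hpj | hpj
      · have h1 : A₁ j = 0 := by nlinarith [hA₁.1 j, hA₂.1 j, hA j]
        have h2 : A₂ j = 0 := by nlinarith [hA₁.1 j, hA₂.1 j, hA j]
        simp [h1, h2, ← hpj]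
      · have hqj := hqpos j
        have hdj := hden j
        have piece1 : ρ * (A₁ j * Real.log (A₁ j / q j)) =
            ρ * (A₁ j * Real.log (A₁ j / P1 j))
            + ρ * A₁ j * (Real.log c - Real.log ρ)
            + ρ * A₁ j * Real.log (p j / (c * q j + p j)) := by
          rcases eq_or_lt_of_le (hA₁.1 j) with h | h
          · simp [← h]
          · have hP1pos : 0 < P1 j := by
              simp only [hP1def]
              positivity
            have lq := Real.log_div h.ne' hqj.ne'
            have lP := Real.log_div h.ne' hP1pos.ne'
            have lL := Real.log_div hpj.ne' hdj.ne'
            have lP1 : Real.log (P1 j) =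
                Real.log c + (Real.log (p j) + Real.log (q j) - Real.log (c * q j + p j))
                  - Real.log ρ := by
              simp only [hP1def]
              rw [Real.log_div (mul_ne_zero hc.ne'
                    (div_ne_zero (mul_ne_zero hpj.ne' hqj.ne') hdj.ne')) hρ0.ne',
                  Real.log_mul hc.ne' (div_ne_zero (mul_ne_zero hpj.ne' hqj.ne') hdj.ne'),
                  Real.log_div (mul_ne_zero hpj.ne' hqj.ne') hdj.ne',
                  Real.log_mul hpj.ne' hqj.ne']
            rw [lq, lP, lL, lP1]; ring
        have piece2 : (1 - ρ) * (A₂ j * Real.log (A₂ j / p j)) =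
            (1 - ρ) * (A₂ j * Real.log (A₂ j / P2 j))
            - (1 - ρ) * A₂ j * Real.log (1 - ρ)
            + (1 - ρ) * A₂ j * Real.log (p j / (c * q j + p j)) := by
          rcases eq_or_lt_of_le (hA₂.1 j) with h | h
          · simp [← h]
          · have hP2pos : 0 < P2 j := by
              simp only [hP2def]
              positivity
            have lq := Real.log_div h.ne' hpj.ne'
            have lP := Real.log_div h.ne' hP2pos.ne'
            have lL := Real.log_div hpj.ne' hdj.ne'
            have lP2 : Real.log (P2 j) =
                Real.log (p j) + Real.log (p j) - Real.log (c * q j + p j)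
                  - Real.log (1 - ρ) := by
              simp only [hP2def]
              rw [Real.log_div (div_ne_zero (mul_ne_zero hpj.ne' hpj.ne') hdj.ne') hρ1'.ne',
                  Real.log_div (mul_ne_zero hpj.ne' hpj.ne') hdj.ne',
                  Real.log_mul hpj.ne' hpj.ne']
            rw [lq, lP, lL, lP2]; ring
        have hL : p j * Real.log (p j / (c * q j + p j)) =
            ρ * A₁ j * Real.log (p j / (c * q j + p j))
            + (1 - ρ) * A₂ j * Real.log (p j / (c * q j + p j)) := by
          rw [← hA j]; ring
        linarith [piece1, piece2, hL]
    have hsplit : ρ * KLdiv A₁ q + (1 - ρ) * KLdiv A₂ p =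
        ∑ j, (ρ * (A₁ j * Real.log (A₁ j / q j)) + (1 - ρ) * (A₂ j * Real.log (A₂ j / p j))) := by
      rw [KLdiv, KLdiv, Finset.mul_sum, Finset.mul_sum, ← Finset.sum_add_distrib]
    rw [hsplit, Finset.sum_congr rfl fun j _ => hpoint j]
    rw [Finset.sum_add_distrib, Finset.sum_add_distrib, Finset.sum_add_distrib,
        ← Finset.mul_sum, ← Finset.mul_sum, hA₁.2, hA₂.2, hTv, binEnt]
    ring
  -- nonnegativity of the Gibbs part
  have hG : ∀ A₁ A₂ : Fin n → ℝ, IsPMF A₁ → IsPMF A₂ →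
      (∀ x, ρ * A₁ x + (1 - ρ) * A₂ x = p x) →
      0 ≤ ∑ j, (ρ * (A₁ j * Real.log (A₁ j / P1 j))
        + (1 - ρ) * (A₂ j * Real.log (A₂ j / P2 j))) := by
    intro A₁ A₂ hA₁ hA₂ hA
    have hzero : (0:ℝ) = ∑ j, (ρ * (A₁ j - P1 j) + (1 - ρ) * (A₂ j - P2 j)) := by
      rw [Finset.sum_add_distrib, ← Finset.mul_sum, ← Finset.mul_sum,
          Finset.sum_sub_distrib, Finset.sum_sub_distrib, hA₁.2, hA₂.2, hsum1, hsum2]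
      ring
    rw [hzero]
    apply Finset.sum_le_sum
    intro j _
    have g1 : A₁ j - P1 j ≤ A₁ j * Real.log (A₁ j / P1 j) := by
      apply gibbs_term _ _ (hA₁.1 j) (hP1nn j)
      intro hne
      have hA1pos : 0 < A₁ j := lt_of_le_of_ne (hA₁.1 j) (Ne.symm hne)
      have hppos : 0 < p j := by nlinarith [hA₂.1 j, hA j]
      show 0 < c * (p j * q j / (c * q j + p j)) / ρ
      exact div_pos (mul_pos hc (div_pos (mul_pos hppos (hqpos j)) (hden j))) hρ0
    have g2 : A₂ j - P2 j ≤ A₂ j * Real.log (A₂ j / P2 j) := by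
      apply gibbs_term _ _ (hA₂.1 j) (hP2nn j)
      intro hne
      have hA2pos : 0 < A₂ j := lt_of_le_of_ne (hA₂.1 j) (Ne.symm hne)
      have hppos : 0 < p j := by nlinarith [hA₁.1 j, hA j]
      show 0 < p j * p j / (c * q j + p j) / (1 - ρ)
      exact div_pos (div_pos (mul_pos hppos hppos) (hden j)) hρ1'
    have := mul_le_mul_of_nonneg_left g1 hρ0.le
    have := mul_le_mul_of_nonneg_left g2 hρ1'.le
    linarith
  -- Gibbs part vanishes at the optimum
  have hGzero : ∑ j, (ρ * (P1 j * Real.log (P1 j / P1 j))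
      + (1 - ρ) * (P2 j * Real.log (P2 j / P2 j))) = 0 := by
    apply Finset.sum_eq_zero
    intro j _
    rcases eq_or_ne (P1 j) 0 with h1 | h1 <;> rcases eq_or_ne (P2 j) 0 with h2 | h2 <;>
      simp [h1, h2, div_self, Real.log_one]
  -- the stated RHS equals Tv
  have hRT : KLdiv p q - (∑ j, p j * Real.log (c + p j / q j)) + ρ * Real.log c + binEnt ρ
      = Tv := by
    have h1 : KLdiv p q - (∑ j, p j * Real.log (c + p j / q j))
        = ∑ j, p j * Real.log (p j / (c * q j + p j)) := by
      rw [KLdiv, ← Finset.sum_sub_distrib]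
      apply Finset.sum_congr rfl
      intro j _
      rcases eq_or_lt_of_le (hp.1 j) with hpj | hpj
      · simp [← hpj]
      · have hqj := hqpos j
        have hdj := hden j
        have hcq : c + p j / q j = (c * q j + p j) / q j := by field_simp
        rw [hcq, Real.log_div hdj.ne' hqj.ne', Real.log_div hpj.ne' hqj.ne',
            Real.log_div hpj.ne' hdj.ne']
        ring
    rw [hTv, ← h1]
  rw [hRT, partialDiv]
  apply IsLeast.csInf_eq
  constructor
  · exact ⟨P1, P2, ⟨hP1nn, hsum1⟩, ⟨hP2nn, hsum2⟩, hcons, by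
      rw [hkey P1 P2 ⟨hP1nn, hsum1⟩ ⟨hP2nn, hsum2⟩ hcons, hGzero, zero_add]⟩
  · rintro v ⟨A₁, A₂, h1, h2, h3, rfl⟩
    rw [hkey A₁ A₂ h1 h2 h3]
    have := hG A₁ A₂ h1 h2 h3
    linarith
end

section
/- Let 𝒳 be a finite alphabet and let P, Q be probability mass functions on 𝒳 with Q(x) > 0 for all x and P ≠ Q. Then the partial divergence is strictly increasing in the mismatch ratio: for all 0 ≤ ρ₁ < ρ₂ ≤ 1, d_{ρ₁}(P‖Q) < d_{ρ₂}(P‖Q). In particular d_ρ(P‖Q) > 0 for every ρ ∈ (0,1]. -/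
section aux

open Real Finset



/-- `(u-1)^2/2 ≤ u log u - u + 1` for `0 ≤ u ≤ 1`. -/
lemma ineqA {u : ℝ} (hu0 : 0 ≤ u) (hu1 : u ≤ 1) :
    (u - 1) ^ 2 / 2 ≤ u * Real.log u - u + 1 := by
  set f : ℝ → ℝ := fun x => x * Real.log x - x + 1 - (x - 1) ^ 2 / 2 with hf
  have hder : ∀ x : ℝ, x ≠ 0 → HasDerivAt f (Real.log x + 1 - 1 - (x - 1)) x := by
    intro x hx
    have h1 := Real.hasDerivAt_mul_log hx
    have h2 : HasDerivAt (fun x : ℝ => (x - 1) ^ 2 / 2) (x - 1) x := by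
      have := (((hasDerivAt_id x).sub_const 1).pow 2).div_const 2
      refine this.congr_deriv ?_
      simp only [id_eq]
      ring
    have := (((h1.sub (hasDerivAt_id x)).add_const 1).sub h2)
    exact this
  have hanti : AntitoneOn f (Set.Icc 0 1) := by
    apply antitoneOn_of_deriv_nonpos (convex_Icc 0 1)
    · apply ContinuousOn.sub
      · exact ((Real.continuous_mul_log.sub continuous_id).add continuous_const).continuousOn
      · exact (((continuous_id.sub continuous_const).pow 2).div_const 2).continuousOn
    · intro x hx
      rw [interior_Icc] at hx
      exact ((hder x (ne_of_gt hx.1)).differentiableAt).differentiableWithinAt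
    · intro x hx
      rw [interior_Icc] at hx
      rw [(hder x (ne_of_gt hx.1)).deriv]
      have := Real.log_le_sub_one_of_pos hx.1
      linarith
  have h0 : f 1 = 0 := by simp [hf]
  have := hanti (Set.mem_Icc.2 ⟨hu0, hu1⟩) (Set.mem_Icc.2 ⟨zero_le_one, le_refl 1⟩) hu1
  rw [h0] at this
  simp only [hf] at this
  linarith

/-- `(1-v)^2/2 ≤ v - 1 - log v` for `0 < v ≤ 1`. -/
lemma ineqB {v : ℝ} (hv0 : 0 < v) (hv1 : v ≤ 1) :
    (1 - v) ^ 2 / 2 ≤ v - 1 - Real.log v := by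
  set f : ℝ → ℝ := fun x => x - 1 - Real.log x - (1 - x) ^ 2 / 2 with hf
  have hder : ∀ x : ℝ, 0 < x → HasDerivAt f (1 - x⁻¹ - (x - 1)) x := by
    intro x hx
    have h1 := Real.hasDerivAt_log (ne_of_gt hx)
    have h2 : HasDerivAt (fun x : ℝ => (1 - x) ^ 2 / 2) (x - 1) x := by
      have := (((hasDerivAt_id x).const_sub 1).pow 2).div_const 2
      refine this.congr_deriv ?_
      simp only [id_eq]
      ring
    have := ((((hasDerivAt_id x).sub_const 1).sub h1).sub h2)
    exact this
  have hanti : AntitoneOn f (Set.Icc v 1) := by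
    apply antitoneOn_of_deriv_nonpos (convex_Icc v 1)
    · intro x hx
      exact ((hder x (lt_of_lt_of_le hv0 hx.1)).differentiableAt).continuousAt.continuousWithinAt
    · intro x hx
      rw [interior_Icc] at hx
      exact ((hder x (lt_trans hv0 hx.1)).differentiableAt).differentiableWithinAt
    · intro x hx
      rw [interior_Icc] at hx
      have hxpos : 0 < x := lt_trans hv0 hx.1
      rw [(hder x hxpos).deriv]
      have : (1 - x⁻¹ - (x - 1)) * x = -(x - 1) ^ 2 := by field_simp; ring
      nlinarith [sq_nonneg (x - 1)]
  have h0 : f 1 = 0 := by simp [hf]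
  have := hanti (Set.mem_Icc.2 ⟨le_refl v, hv1⟩) (Set.mem_Icc.2 ⟨hv1, le_refl 1⟩) hv1
  rw [h0] at this
  simp only [hf] at this
  linarith

/-- per-term Pinsker-type bound. -/
lemma pinsker_term {p q : ℝ} (hp : 0 ≤ p) (hq : 0 < q) :
    (p - q) ^ 2 / (2 * (p + q)) ≤ p * Real.log (p / q) - p + q := by
  rcases le_or_gt p q with h | h
  · have hu1 : p / q ≤ 1 := (div_le_one hq).2 h
    have hA := ineqA (div_nonneg hp hq.le) hu1
    have h2 : (p - q) ^ 2 / (2 * q) ≤ p * Real.log (p / q) - p + q := by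
      have := mul_le_mul_of_nonneg_left hA hq.le
      have e1 : q * ((p / q - 1) ^ 2 / 2) = (p - q) ^ 2 / (2 * q) := by
        field_simp
      have e2 : q * (p / q * Real.log (p / q) - p / q + 1)
          = p * Real.log (p / q) - p + q := by
        field_simp
      rw [e1, e2] at this
      exact this
    refine le_trans ?_ h2
    exact div_le_div_of_nonneg_left (sq_nonneg _) (by linarith) (by linarith)
  · have hppos : 0 < p := lt_trans hq h
    have hv1 : q / p ≤ 1 := (div_le_one hppos).2 h.le
    have hB := ineqB (div_pos hq hppos) hv1
    have hlog : Real.log (q / p) = -Real.log (p / q) := by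
      rw [← Real.log_inv, inv_div]
    have h2 : (p - q) ^ 2 / (2 * p) ≤ p * Real.log (p / q) - p + q := by
      have := mul_le_mul_of_nonneg_left hB hppos.le
      have e1 : p * ((1 - q / p) ^ 2 / 2) = (p - q) ^ 2 / (2 * p) := by
        field_simp
      have e2 : p * (q / p - 1 - Real.log (q / p))
          = q - p + p * Real.log (p / q) := by
        rw [hlog]
        field_simp
        ring
      rw [e1, e2] at this
      linarith
    refine le_trans ?_ h2
    exact div_le_div_of_nonneg_left (sq_nonneg _) (by linarith) (by linarith)


lemma KLdiv_self {X : Type*} [Fintype X] (P : X → ℝ) : KLdiv P P = 0 := by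
  rw [KLdiv]
  apply Finset.sum_eq_zero
  intro x _
  rcases eq_or_ne (P x) 0 with h | h
  · simp [h]
  · rw [div_self h, Real.log_one, mul_zero]

/-- sum over full pmf decomposition, rewritten form of KL. -/
lemma KLdiv_eq_sum {X : Type*} [Fintype X] (A B : X → ℝ) (hA : ∑ x, A x = 1)
    (hB : ∑ x, B x = 1) :
    KLdiv A B = ∑ x, (A x * Real.log (A x / B x) - A x + B x) := by
  rw [KLdiv, Finset.sum_add_distrib, Finset.sum_sub_distrib, hA, hB]
  ring

lemma KLdiv_lb {X : Type*} [Fintype X] (A B : X → ℝ) (hA : IsPMF A) (hB : IsPMF B)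
    (hsupp : ∀ x, B x = 0 → A x = 0) :
    (∑ x, |A x - B x|) ^ 2 / (4 * (Fintype.card X : ℝ)) ≤ KLdiv A B := by
  have hXne : Nonempty X := by
    by_contra h
    rw [not_nonempty_iff] at h
    have := hA.2
    rw [Finset.univ_eq_empty, Finset.sum_empty] at this
    norm_num at this
  have hcard : (0 : ℝ) < (Fintype.card X : ℝ) := by
    exact_mod_cast Fintype.card_pos
  have hterm : ∀ x, (A x - B x) ^ 2 / 4 ≤ A x * Real.log (A x / B x) - A x + B x := by
    intro x
    rcases eq_or_lt_of_le (hB.1 x) with hb | hb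
    · rw [hsupp x hb.symm, ← hb]
      norm_num
    · refine le_trans ?_ (pinsker_term (hA.1 x) hb)
      have hA1 : A x ≤ 1 := by
        rw [← hA.2]
        exact Finset.single_le_sum (fun i _ => hA.1 i) (Finset.mem_univ x)
      have hB1 : B x ≤ 1 := by
        rw [← hB.2]
        exact Finset.single_le_sum (fun i _ => hB.1 i) (Finset.mem_univ x)
      exact div_le_div_of_nonneg_left (sq_nonneg _) (by linarith [hA.1 x]) (by linarith)
  calc (∑ x, |A x - B x|) ^ 2 / (4 * (Fintype.card X : ℝ))
      ≤ ((Fintype.card X : ℝ) * ∑ x, (A x - B x) ^ 2) / (4 * (Fintype.card X : ℝ)) := by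
        apply div_le_div_of_nonneg_right ?_ (by positivity)
        have h := sq_sum_le_card_mul_sum_sq (s := Finset.univ) (f := fun x => |A x - B x|)
        simpa [sq_abs, Finset.card_univ] using h
    _ = ∑ x, (A x - B x) ^ 2 / 4 := by
        rw [← Finset.sum_div]
        field_simp
    _ ≤ ∑ x, (A x * Real.log (A x / B x) - A x + B x) :=
        Finset.sum_le_sum (fun x _ => hterm x)
    _ = KLdiv A B := (KLdiv_eq_sum A B hA.2 hB.2).symm

end aux

section aux2

open Real Finset

lemma card_pos_of_pmf {X : Type*} [Fintype X] {P : X → ℝ} (hP : IsPMF P) :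
    (0 : ℝ) < (Fintype.card X : ℝ) := by
  have hXne : Nonempty X := by
    by_contra h
    rw [not_nonempty_iff] at h
    have := hP.2
    rw [Finset.univ_eq_empty, Finset.sum_empty] at this
    norm_num at this
  exact_mod_cast Fintype.card_pos

lemma convex_term {p a α : ℝ} (hp : 0 ≤ p) (ha : 0 ≤ a) (hα0 : 0 ≤ α) (hα1 : α ≤ 1)
    (hsupp : p = 0 → a = 0) :
    (α * a + (1 - α) * p) * Real.log ((α * a + (1 - α) * p) / p)
      ≤ α * (a * Real.log (a / p)) := by
  rcases eq_or_lt_of_le hp with h0 | hppos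
  · have ha0 := hsupp h0.symm
    simp [← h0, ha0]
  · have hrw : ∀ t : ℝ, 0 ≤ t → t * Real.log (t / p) = t * Real.log t - t * Real.log p := by
      intro t ht
      rcases eq_or_lt_of_le ht with h | h
      · simp [← h]
      · rw [Real.log_div (ne_of_gt h) (ne_of_gt hppos)]
        ring
    have hcx := Real.convexOn_mul_log.2 (Set.mem_Ici.2 ha) (Set.mem_Ici.2 hppos.le)
      hα0 (by linarith : (0:ℝ) ≤ 1 - α) (by ring)
    simp only [smul_eq_mul] at hcx
    have ht0 : 0 ≤ α * a + (1 - α) * p :=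
      add_nonneg (mul_nonneg hα0 ha) (mul_nonneg (by linarith) hp)
    rw [hrw _ ht0, hrw a ha]
    nlinarith [hcx]

lemma mem_lb {X : Type*} [Fintype X] {P Q : X → ℝ} (hP : IsPMF P) (hQ : IsPMF Q)
    (hQpos : ∀ x, 0 < Q x) {ρ v : ℝ} (hρ0 : 0 < ρ) (hρ1 : ρ ≤ 1)
    (hv : ∃ P₁ P₂ : X → ℝ, IsPMF P₁ ∧ IsPMF P₂ ∧
      (∀ x, ρ * P₁ x + (1 - ρ) * P₂ x = P x) ∧
      v = ρ * KLdiv P₁ Q + (1 - ρ) * KLdiv P₂ P) :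
    ρ ^ 2 * (∑ x, |P x - Q x|) ^ 2 / (4 * (Fintype.card X : ℝ)) ≤ v := by
  obtain ⟨P₁, P₂, h₁, h₂, hc, rfl⟩ := hv
  have hn : (0 : ℝ) < (Fintype.card X : ℝ) := card_pos_of_pmf hP
  set n : ℝ := (Fintype.card X : ℝ)
  set T := ∑ x, |P x - Q x| with hT_def
  set a := ∑ x, |P₁ x - Q x| with ha_def
  set b := ∑ x, |P₂ x - P x| with hb_def
  have ha0 : 0 ≤ a := Finset.sum_nonneg fun i _ => abs_nonneg _
  have hb0 : 0 ≤ b := Finset.sum_nonneg fun i _ => abs_nonneg _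
  have hT0 : 0 ≤ T := Finset.sum_nonneg fun i _ => abs_nonneg _
  have hD1 : a ^ 2 / (4 * n) ≤ KLdiv P₁ Q :=
    KLdiv_lb _ _ h₁ hQ (fun x hx => absurd hx (ne_of_gt (hQpos x)))
  have hTab : ρ * T ≤ ρ * a + (1 - ρ) * b := by
    have e1 : ρ * T = ∑ x, |ρ * (P x - Q x)| := by
      rw [hT_def, Finset.mul_sum]
      apply Finset.sum_congr rfl
      intro x _
      rw [abs_mul, abs_of_nonneg hρ0.le]
    have e2 : ρ * a + (1 - ρ) * b
        = ∑ x, (ρ * |P₁ x - Q x| + (1 - ρ) * |P₂ x - P x|) := by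
      rw [Finset.sum_add_distrib, ha_def, hb_def, Finset.mul_sum, Finset.mul_sum]
    rw [e1, e2]
    apply Finset.sum_le_sum
    intro x _
    have he : ρ * (P x - Q x) = ρ * (P₁ x - Q x) + (1 - ρ) * (P₂ x - P x) := by
      linear_combination -(hc x)
    calc |ρ * (P x - Q x)| = |ρ * (P₁ x - Q x) + (1 - ρ) * (P₂ x - P x)| := by rw [he]
      _ ≤ |ρ * (P₁ x - Q x)| + |(1 - ρ) * (P₂ x - P x)| := abs_add_le _ _
      _ = ρ * |P₁ x - Q x| + (1 - ρ) * |P₂ x - P x| := by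
          rw [abs_mul, abs_mul, abs_of_nonneg hρ0.le,
            abs_of_nonneg (by linarith : (0:ℝ) ≤ 1 - ρ)]
  rcases eq_or_lt_of_le hρ1 with h1 | h1
  · subst h1
    have hTa : T ≤ a := by linarith
    have hT2 : T ^ 2 ≤ a ^ 2 := pow_le_pow_left₀ hT0 hTa 2
    calc 1 ^ 2 * T ^ 2 / (4 * n) = T ^ 2 / (4 * n) := by ring
      _ ≤ a ^ 2 / (4 * n) := div_le_div_of_nonneg_right hT2 (by positivity)
      _ ≤ KLdiv P₁ Q := hD1
      _ = 1 * KLdiv P₁ Q + (1 - 1) * KLdiv P₂ P := by ring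
  · have hρ' : 0 < 1 - ρ := by linarith
    have hsupp2 : ∀ x, P x = 0 → P₂ x = 0 := by
      intro x hx
      have h := hc x
      rw [hx] at h
      have h1' : 0 ≤ ρ * P₁ x := mul_nonneg hρ0.le (h₁.1 x)
      have h2' : 0 ≤ (1 - ρ) * P₂ x := mul_nonneg hρ'.le (h₂.1 x)
      nlinarith [h₂.1 x]
    have hD2 : b ^ 2 / (4 * n) ≤ KLdiv P₂ P := KLdiv_lb _ _ h₂ hP hsupp2
    have hsq : (ρ * a + (1 - ρ) * b) ^ 2 ≤ ρ * a ^ 2 + (1 - ρ) * b ^ 2 := by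
      nlinarith [mul_nonneg (mul_nonneg hρ0.le hρ'.le) (sq_nonneg (a - b))]
    have hT2 : (ρ * T) ^ 2 ≤ (ρ * a + (1 - ρ) * b) ^ 2 :=
      pow_le_pow_left₀ (by positivity) hTab 2
    calc ρ ^ 2 * T ^ 2 / (4 * n) = (ρ * T) ^ 2 / (4 * n) := by ring
      _ ≤ (ρ * a ^ 2 + (1 - ρ) * b ^ 2) / (4 * n) :=
          div_le_div_of_nonneg_right (le_trans hT2 hsq) (by positivity)
      _ = ρ * (a ^ 2 / (4 * n)) + (1 - ρ) * (b ^ 2 / (4 * n)) := by ring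
      _ ≤ ρ * KLdiv P₁ Q + (1 - ρ) * KLdiv P₂ P := by
          have g1 := mul_le_mul_of_nonneg_left hD1 hρ0.le
          have g2 := mul_le_mul_of_nonneg_left hD2 hρ'.le
          linarith

end aux2

/-- If `P ≠ Q` (and `Q > 0` pointwise), the partial divergence is strictly increasing
in the mismatch ratio on `[0,1]`; in particular it is strictly positive on `(0,1]`. -/
theorem partialDiv_strictMono {X : Type*} [Fintype X] (P Q : X → ℝ)
    (hP : IsPMF P) (hQ : IsPMF Q) (hQpos : ∀ x, 0 < Q x) (hne : P ≠ Q) :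
    (∀ ρ₁ ρ₂ : ℝ, 0 ≤ ρ₁ → ρ₁ < ρ₂ → ρ₂ ≤ 1 →
      partialDiv ρ₁ P Q < partialDiv ρ₂ P Q) ∧
    (∀ ρ : ℝ, 0 < ρ → ρ ≤ 1 → 0 < partialDiv ρ P Q) := by
  classical
  set S : ℝ → Set ℝ := fun ρ => { v : ℝ | ∃ P₁ P₂ : X → ℝ, IsPMF P₁ ∧ IsPMF P₂ ∧
    (∀ x, ρ * P₁ x + (1 - ρ) * P₂ x = P x) ∧
    v = ρ * KLdiv P₁ Q + (1 - ρ) * KLdiv P₂ P } with hS_def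
  have hpd : ∀ ρ : ℝ, partialDiv ρ P Q = sInf (S ρ) := fun ρ => rfl
  have hn : (0 : ℝ) < (Fintype.card X : ℝ) := card_pos_of_pmf hP
  set n : ℝ := (Fintype.card X : ℝ)
  set T : ℝ := ∑ x, |P x - Q x| with hT_def
  have hT : 0 < T := by
    have hx : ∃ x, P x ≠ Q x := by
      by_contra h
      push_neg at h
      exact hne (funext h)
    obtain ⟨x, hx⟩ := hx
    have h1 : 0 < |P x - Q x| := abs_pos.2 (sub_ne_zero.2 hx)
    have hle : |P x - Q x| ≤ T :=
      Finset.single_le_sum (f := fun x => |P x - Q x|) (fun i _ => abs_nonneg _)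
        (Finset.mem_univ x)
    linarith
  have hmem : ∀ ρ : ℝ, (ρ * KLdiv P Q) ∈ S ρ := by
    intro ρ
    exact ⟨P, P, hP, hP, fun x => by ring, by rw [KLdiv_self]; ring⟩
  have hlb : ∀ ρ : ℝ, 0 < ρ → ρ ≤ 1 → ∀ v ∈ S ρ,
      ρ ^ 2 * T ^ 2 / (4 * n) ≤ v := by
    intro ρ h0 h1 v hv
    exact mem_lb hP hQ hQpos h0 h1 hv
  have hpos : ∀ ρ : ℝ, 0 < ρ → ρ ≤ 1 → 0 < partialDiv ρ P Q := by
    intro ρ h0 h1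
    rw [hpd]
    have hc : ρ ^ 2 * T ^ 2 / (4 * n) ≤ sInf (S ρ) :=
      le_csInf ⟨_, hmem ρ⟩ (hlb ρ h0 h1)
    have : 0 < ρ ^ 2 * T ^ 2 / (4 * n) := by positivity
    linarith
  refine ⟨?_, hpos⟩
  intro ρ₁ ρ₂ h0 h12 h21
  have hρ₂ : 0 < ρ₂ := lt_of_le_of_lt h0 h12
  have hpos₂ : 0 < partialDiv ρ₂ P Q := hpos ρ₂ hρ₂ h21
  rcases eq_or_lt_of_le h0 with h0' | h0'
  · -- ρ₁ = 0
    have hzero : partialDiv ρ₁ P Q = 0 := by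
      rw [hpd, ← h0']
      have hset : S 0 = {0} := by
        ext v
        simp only [hS_def, Set.mem_setOf_eq, Set.mem_singleton_iff]
        constructor
        · rintro ⟨P₁, P₂, h₁, h₂, hc, rfl⟩
          have hP₂ : P₂ = P := funext fun x => by have := hc x; linarith
          rw [hP₂, KLdiv_self]
          ring
        · rintro rfl
          exact ⟨Q, P, hQ, hP, fun x => by ring, by simp [KLdiv_self]⟩
      rw [hset, csInf_singleton]
    rw [hzero]
    exact hpos₂
  · -- 0 < ρ₁
    have hρ₁1 : ρ₁ < 1 := lt_of_lt_of_le h12 h21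
    have h1ρ₁ : 0 < 1 - ρ₁ := by linarith
    set lam := ρ₁ / ρ₂ with hlam_def
    have hlam0 : 0 < lam := div_pos h0' hρ₂
    have hlam1 : lam < 1 := (div_lt_one hρ₂).2 h12
    have hρlam : ρ₁ = lam * ρ₂ := by
      rw [hlam_def]
      field_simp
    have hbdd : BddBelow (S ρ₁) :=
      ⟨ρ₁ ^ 2 * T ^ 2 / (4 * n), fun v hv => hlb ρ₁ h0' hρ₁1.le v hv⟩
    have key : ∀ v ∈ S ρ₂, sInf (S ρ₁) ≤ lam * v := by
      intro v hv
      obtain ⟨P₁, P₂, h₁, h₂, hc, rfl⟩ := hv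
      set α := lam * (1 - ρ₂) / (1 - ρ₁) with hα_def
      have hα0 : 0 ≤ α :=
        div_nonneg (mul_nonneg hlam0.le (by linarith)) h1ρ₁.le
      have hα1 : α ≤ 1 := by
        rw [hα_def, div_le_one h1ρ₁, hlam_def, div_mul_eq_mul_div, div_le_iff₀ hρ₂]
        nlinarith
      have hα' : (1 - ρ₁) * α = lam * (1 - ρ₂) := by
        rw [hα_def]
        field_simp
      have hα'' : (1 - ρ₁) * (1 - α) = 1 - lam := by
        rw [hα_def, hlam_def]
        field_simp
        ring
      set P₂' := fun x => α * P₂ x + (1 - α) * P x with hP₂'_def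
      have hpmf' : IsPMF P₂' := by
        constructor
        · intro x
          exact add_nonneg (mul_nonneg hα0 (h₂.1 x)) (mul_nonneg (by linarith) (hP.1 x))
        · rw [hP₂'_def]
          rw [Finset.sum_add_distrib, ← Finset.mul_sum, ← Finset.mul_sum, h₂.2, hP.2]
          ring
      have hc' : ∀ x, ρ₁ * P₁ x + (1 - ρ₁) * P₂' x = P x := by
        intro x
        have h := hc x
        calc ρ₁ * P₁ x + (1 - ρ₁) * (α * P₂ x + (1 - α) * P x)
            = ρ₁ * P₁ x + ((1 - ρ₁) * α) * P₂ x + ((1 - ρ₁) * (1 - α)) * P x := by ring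
          _ = lam * ρ₂ * P₁ x + (lam * (1 - ρ₂)) * P₂ x + (1 - lam) * P x := by
              rw [hα', hα'', ← hρlam]
          _ = lam * (ρ₂ * P₁ x + (1 - ρ₂) * P₂ x) + (1 - lam) * P x := by ring
          _ = lam * P x + (1 - lam) * P x := by rw [h]
          _ = P x := by ring
      have hKL2 : KLdiv P₂' P ≤ α * KLdiv P₂ P := by
        by_cases hρ₂1 : ρ₂ = 1
        · have hα_eq : α = 0 := by
            rw [hα_def, hρ₂1]
            simp
          have hPP : P₂' = P := by
            funext x
            rw [hP₂'_def, hα_eq]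
            ring
          rw [hPP, KLdiv_self, hα_eq]
          simp
        · have hρ₂lt : ρ₂ < 1 := lt_of_le_of_ne h21 hρ₂1
          have hρ₂' : 0 < 1 - ρ₂ := by linarith
          have hsupp : ∀ x, P x = 0 → P₂ x = 0 := by
            intro x hx
            have h := hc x
            rw [hx] at h
            have h1' : 0 ≤ ρ₂ * P₁ x := mul_nonneg hρ₂.le (h₁.1 x)
            have h2' : 0 ≤ (1 - ρ₂) * P₂ x := mul_nonneg hρ₂'.le (h₂.1 x)
            nlinarith [h₂.1 x]
          rw [KLdiv, KLdiv, Finset.mul_sum]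
          apply Finset.sum_le_sum
          intro x _
          exact convex_term (hP.1 x) (h₂.1 x) hα0 hα1 (hsupp x)
      have hw : sInf (S ρ₁) ≤ ρ₁ * KLdiv P₁ Q + (1 - ρ₁) * KLdiv P₂' P :=
        csInf_le hbdd ⟨P₁, P₂', h₁, hpmf', hc', rfl⟩
      have hfinal : ρ₁ * KLdiv P₁ Q + (1 - ρ₁) * KLdiv P₂' P
          ≤ lam * (ρ₂ * KLdiv P₁ Q + (1 - ρ₂) * KLdiv P₂ P) := by
        have g1 : (1 - ρ₁) * KLdiv P₂' P ≤ (1 - ρ₁) * (α * KLdiv P₂ P) :=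
          mul_le_mul_of_nonneg_left hKL2 h1ρ₁.le
        calc ρ₁ * KLdiv P₁ Q + (1 - ρ₁) * KLdiv P₂' P
            ≤ ρ₁ * KLdiv P₁ Q + ((1 - ρ₁) * α) * KLdiv P₂ P := by
              rw [mul_assoc]
              linarith
          _ = lam * ρ₂ * KLdiv P₁ Q + (lam * (1 - ρ₂)) * KLdiv P₂ P := by
              rw [hα', ← hρlam]
          _ = lam * (ρ₂ * KLdiv P₁ Q + (1 - ρ₂) * KLdiv P₂ P) := by ring
      exact le_trans hw hfinal
    have hS₂ne : (S ρ₂).Nonempty := ⟨_, hmem ρ₂⟩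
    have h2' : sInf (S ρ₁) ≤ lam * sInf (S ρ₂) := by
      have hh : sInf (S ρ₁) / lam ≤ sInf (S ρ₂) :=
        le_csInf hS₂ne (fun v hv => (div_le_iff₀ hlam0).2 (by rw [mul_comm]; exact key v hv))
      calc sInf (S ρ₁) = sInf (S ρ₁) / lam * lam := by field_simp
        _ ≤ sInf (S ρ₂) * lam := mul_le_mul_of_nonneg_right hh hlam0.le
        _ = lam * sInf (S ρ₂) := mul_comm _ _
    rw [hpd, hpd]
    rw [hpd] at hpos₂
    have hfin : lam * sInf (S ρ₂) < 1 * sInf (S ρ₂) :=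
      mul_lt_mul_of_pos_right hlam1 hpos₂
    linarith
end

section
/- Let 𝒳 be a finite alphabet and let P, Q be probability mass functions on 𝒳 with Q(x) > 0 for all x. Then for every ρ ∈ [0,1], the partial divergence satisfies d_ρ(P‖Q) ≥ D(P‖ρQ + (1−ρ)P), where ρQ + (1−ρ)P denotes the mixture PMF x ↦ ρQ(x) + (1−ρ)P(x). -/
-- per-term tangent bound
lemma logsum_term (a b s t : ℝ) (ha : 0 ≤ a) (hb : 0 ≤ b) (hs : 0 < s) (ht : 0 < t)
    (hba : b = 0 → a = 0) :
    a * Real.log (s / t) + a - b * (s / t) ≤ a * Real.log (a / b) := by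
  rcases eq_or_lt_of_le ha with h | hapos
  · simp only [← h]
    have hb' : (0:ℝ) ≤ b * (s / t) := mul_nonneg hb (div_pos hs ht).le
    simp only [zero_mul, zero_add, zero_sub, neg_nonpos, div_zero]
    linarith
  · have hbpos : 0 < b := by
      rcases eq_or_lt_of_le hb with h | h
      · exact absurd (hba h.symm) (ne_of_gt hapos)
      · exact h
    have key : Real.log (b * s / (a * t)) ≤ b * s / (a * t) - 1 :=
      Real.log_le_sub_one_of_pos (by positivity)
    have hlog : Real.log (a / b) = Real.log (s / t) + Real.log (a * t / (b * s)) := by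
      rw [← Real.log_mul (by positivity) (by positivity)]
      congr 1; field_simp
    have h2 : Real.log (a * t / (b * s)) = - Real.log (b * s / (a * t)) := by
      rw [← Real.log_inv]; congr 1; field_simp
    have h3 : 1 - b * s / (a * t) ≤ Real.log (a * t / (b * s)) := by
      rw [h2]; linarith
    have h4 : a * (1 - b * s / (a * t)) ≤ a * Real.log (a * t / (b * s)) :=
      mul_le_mul_of_nonneg_left h3 ha
    have h5 : a * (1 - b * s / (a * t)) = a - b * (s / t) := by
      field_simp
    rw [hlog, mul_add]
    linarith

lemma logsum2 (a₁ b₁ a₂ b₂ : ℝ) (ha₁ : 0 ≤ a₁) (hb₁ : 0 ≤ b₁) (ha₂ : 0 ≤ a₂) (hb₂ : 0 ≤ b₂)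
    (h1 : b₁ = 0 → a₁ = 0) (h2 : b₂ = 0 → a₂ = 0) :
    (a₁ + a₂) * Real.log ((a₁ + a₂) / (b₁ + b₂)) ≤
      a₁ * Real.log (a₁ / b₁) + a₂ * Real.log (a₂ / b₂) := by
  rcases eq_or_lt_of_le (add_nonneg hb₁ hb₂) with ht | ht
  · have hb1 : b₁ = 0 := by linarith
    have hb2 : b₂ = 0 := by linarith
    simp [h1 hb1, h2 hb2]
  rcases eq_or_lt_of_le (add_nonneg ha₁ ha₂) with hs | hs
  · have ha1 : a₁ = 0 := by linarith
    have ha2 : a₂ = 0 := by linarith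
    simp [ha1, ha2]
  · have t1 := logsum_term a₁ b₁ (a₁ + a₂) (b₁ + b₂) ha₁ hb₁ hs ht h1
    have t2 := logsum_term a₂ b₂ (a₁ + a₂) (b₁ + b₂) ha₂ hb₂ hs ht h2
    have hcancel : (b₁ + b₂) * ((a₁ + a₂) / (b₁ + b₂)) = a₁ + a₂ := by
      field_simp
    nlinarith [t1, t2]

/-- For every `ρ ∈ [0,1]`, `d_ρ(P‖Q) ≥ D(P ‖ ρQ + (1−ρ)P)`. -/
theorem partialDiv_ge_klDiv_mixture {X : Type*} [Fintype X] (P Q : X → ℝ)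
    (hP : IsPMF P) (hQ : IsPMF Q) (hQpos : ∀ x, 0 < Q x) :
    ∀ ρ ∈ Set.Icc (0 : ℝ) 1,
      partialDiv ρ P Q ≥ KLdiv P (fun x => ρ * Q x + (1 - ρ) * P x) := by
  rintro ρ ⟨hρ0, hρ1⟩
  have hρ' : 0 ≤ 1 - ρ := by linarith
  apply le_csInf
  · exact ⟨ρ * KLdiv P Q + (1 - ρ) * KLdiv P P, P, P, hP, hP,
      fun x => by ring, rfl⟩
  rintro v ⟨P₁, P₂, hP₁, hP₂, hmix, rfl⟩
  have key : ∀ x, P x * Real.log (P x / (ρ * Q x + (1 - ρ) * P x)) ≤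
      ρ * (P₁ x * Real.log (P₁ x / Q x)) + (1 - ρ) * (P₂ x * Real.log (P₂ x / P x)) := by
    intro x
    have hP1x := hP₁.1 x
    have hP2x := hP₂.1 x
    have hPx := hP.1 x
    have hQx := hQpos x
    have hmx := hmix x
    have e1 : ρ * (P₁ x * Real.log (P₁ x / Q x)) =
        (ρ * P₁ x) * Real.log ((ρ * P₁ x) / (ρ * Q x)) := by
      rcases eq_or_lt_of_le hρ0 with h | h
      · simp [← h]
      · rw [mul_div_mul_left _ _ (ne_of_gt h)]; ring
    have e2 : (1 - ρ) * (P₂ x * Real.log (P₂ x / P x)) =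
        ((1 - ρ) * P₂ x) * Real.log (((1 - ρ) * P₂ x) / ((1 - ρ) * P x)) := by
      rcases eq_or_lt_of_le hρ' with h | h
      · simp [← h]
      · rw [mul_div_mul_left _ _ (ne_of_gt h)]; ring
    rw [e1, e2]
    have := logsum2 (ρ * P₁ x) (ρ * Q x) ((1 - ρ) * P₂ x) ((1 - ρ) * P x)
      (by positivity) (by positivity) (by positivity) (by positivity)
      (fun h => by
        have : ρ = 0 := by
          rcases mul_eq_zero.1 h with h' | h'
          · exact h'
          · exact absurd h' (ne_of_gt hQx)
        simp [this])
      (fun h => by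
        rcases mul_eq_zero.1 h with h' | h'
        · simp [h']
        · -- P x = 0, so (1-ρ) * P₂ x = 0
          have h0 : ρ * P₁ x + (1 - ρ) * P₂ x = 0 := by rw [hmx, h']
          have := mul_nonneg hρ0 hP1x
          have := mul_nonneg hρ' hP2x
          linarith)
    rwa [hmx] at this
  calc KLdiv P (fun x => ρ * Q x + (1 - ρ) * P x)
      = ∑ x, P x * Real.log (P x / (ρ * Q x + (1 - ρ) * P x)) := rfl
    _ ≤ ∑ x, (ρ * (P₁ x * Real.log (P₁ x / Q x)) + (1 - ρ) * (P₂ x * Real.log (P₂ x / P x))) :=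
        Finset.sum_le_sum fun x _ => key x
    _ = ρ * KLdiv P₁ Q + (1 - ρ) * KLdiv P₂ P := by
        rw [Finset.sum_add_distrib, ← Finset.mul_sum, ← Finset.mul_sum]; rfl
end

section
/- Let 𝒳 = {1,…,n} and let P = (p_1,…,p_n) and Q = (q_1,…,q_n) be probability mass functions on 𝒳 with q_j > 0 for all j and P ≠ Q. Let ρ ∈ (0,1) and let c > 0 satisfy c·Σ_{j=1}^{n} p_j q_j/(c q_j + p_j) = ρ. Then ρ/(1−ρ) < c. -/
/-- If `P ≠ Q` are PMFs on `{1,…,n}` with `q` everywhere positive, `ρ ∈ (0,1)`, and `c > 0`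
satisfies `c · Σ_j p_j q_j/(c q_j + p_j) = ρ`, then `ρ/(1−ρ) < c`. -/
theorem c_gt_rho_div_one_sub_rho (n : ℕ) (p q : Fin n → ℝ)
    (hp : IsPMF p) (hq : IsPMF q) (hqpos : ∀ j, 0 < q j) (hne : p ≠ q)
    (ρ : ℝ) (hρ : ρ ∈ Set.Ioo (0 : ℝ) 1)
    (c : ℝ) (hc : 0 < c)
    (hceq : c * ∑ j, p j * q j / (c * q j + p j) = ρ) :
    ρ / (1 - ρ) < c := by
  obtain ⟨hppos, hpsum⟩ := hp
  obtain ⟨hqnn, hqsum⟩ := hq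
  have hc1 : (0:ℝ) < 1 + c := by linarith
  have hden : ∀ j, 0 < c * q j + p j := fun j => by
    have := hqpos j; have := hppos j; nlinarith
  -- per-term inequality
  have hle : ∀ j : Fin n,
      p j * q j / (c * q j + p j) ≤ (c * p j + q j) / (1 + c)^2 := by
    intro j
    rw [div_le_div_iff₀ (hden j) (by positivity)]
    have hpj := hppos j; have hqj := hqpos j
    nlinarith [sq_nonneg (p j - q j)]
  have hlt : ∃ j : Fin n, p j * q j / (c * q j + p j) < (c * p j + q j) / (1 + c)^2 := by
    have : ∃ j, p j ≠ q j := by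
      by_contra h
      push_neg at h
      exact hne (funext h)
    obtain ⟨j, hj⟩ := this
    refine ⟨j, ?_⟩
    rw [div_lt_div_iff₀ (hden j) (by positivity)]
    have hpj := hppos j; have hqj := hqpos j
    have hne0 : p j - q j ≠ 0 := sub_ne_zero.mpr hj
    have : (p j - q j)^2 > 0 := by positivity
    nlinarith
  obtain ⟨j, hjlt⟩ := hlt
  have hsumlt : ∑ j, p j * q j / (c * q j + p j) < ∑ j, (c * p j + q j) / (1 + c)^2 :=
    Finset.sum_lt_sum (fun i _ => hle i) ⟨j, Finset.mem_univ j, hjlt⟩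
  have hsumval : ∑ j, (c * p j + q j) / (1 + c)^2 = 1 / (1 + c) := by
    rw [← Finset.sum_div, Finset.sum_add_distrib, ← Finset.mul_sum, hpsum, hqsum]
    field_simp
    ring
  have hρlt : ρ < c / (1 + c) := by
    rw [← hceq]
    calc c * ∑ j, p j * q j / (c * q j + p j) < c * (1 / (1 + c)) := by
          rw [← hsumval]; exact (mul_lt_mul_iff_right₀ hc).2 hsumlt
      _ = c / (1 + c) := by ring
  obtain ⟨hρ0, hρ1⟩ := hρ
  rw [div_lt_iff₀ (by linarith)]
  have h2 : ρ * (1 + c) < c := (lt_div_iff₀ hc1).mp hρlt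
  nlinarith
end

section
/- Let 𝒳 = {1,…,n} and let P = (p_1,…,p_n) and Q = (q_1,…,q_n) be probability mass functions on 𝒳 with p_j > 0 and q_j > 0 for all j, and P ≠ Q. Then for every c > 0, the strict inequality (Σ_{j=1}^{n} c·p_j q_j/(c q_j + p_j))² < Σ_{j=1}^{n} p_j·(c q_j)²/(c q_j + p_j)² holds. -/
/-- Strict Cauchy–Schwarz step: for PMFs `p ≠ q` on `{1,…,n}` with `p, q > 0` and any `c > 0`,
`(Σ_j c p_j q_j/(c q_j + p_j))² < Σ_j p_j (c q_j)²/(c q_j + p_j)²`. -/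
theorem strict_cauchy_schwarz_step (n : ℕ) (p q : Fin n → ℝ)
    (hp : IsPMF p) (hq : IsPMF q)
    (hppos : ∀ j, 0 < p j) (hqpos : ∀ j, 0 < q j) (hne : p ≠ q)
    (c : ℝ) (hc : 0 < c) :
    (∑ j, c * p j * q j / (c * q j + p j)) ^ 2 <
      ∑ j, p j * (c * q j) ^ 2 / (c * q j + p j) ^ 2 := by
  classical
  set x : Fin n → ℝ := fun j => c * q j / (c * q j + p j) with hxdef
  have hden : ∀ j, 0 < c * q j + p j := by
    intro j
    have := hppos j; have := hqpos j
    positivity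
  have hterm1 : ∀ j, c * p j * q j / (c * q j + p j) = p j * x j := by
    intro j
    rw [hxdef]
    field_simp
  have hterm2 : ∀ j, p j * (c * q j) ^ 2 / (c * q j + p j) ^ 2 = p j * (x j) ^ 2 := by
    intro j
    rw [hxdef]
    rw [div_pow, mul_div_assoc]
  rw [Finset.sum_congr rfl (fun j _ => hterm1 j),
      Finset.sum_congr rfl (fun j _ => hterm2 j)]
  set m : ℝ := ∑ j, p j * x j with hmdef
  have hsum1 : ∑ j, p j = 1 := hp.2
  have key : ∑ j, p j * (x j - m) ^ 2 = (∑ j, p j * (x j) ^ 2) - m ^ 2 := by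
    have h1 : ∀ j, p j * (x j - m) ^ 2
        = p j * (x j) ^ 2 - (2 * m) * (p j * x j) + m ^ 2 * p j := by
      intro j; ring
    rw [Finset.sum_congr rfl (fun j _ => h1 j)]
    rw [Finset.sum_add_distrib, Finset.sum_sub_distrib, ← Finset.mul_sum,
        ← Finset.mul_sum, hsum1, ← hmdef]
    ring
  -- find an index where p ≠ q
  obtain ⟨j₀, hj₀⟩ : ∃ j, p j ≠ q j := by
    by_contra h
    push_neg at h
    exact hne (funext h)
  have hxpos : ∀ j, 0 < x j := by
    intro j
    have := hqpos j
    exact div_pos (by positivity) (hden j)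
  have hxne : ∃ j, x j ≠ m := by
    by_contra h
    push_neg at h
    have hmpos : 0 < m := by rw [← h j₀]; exact hxpos j₀
    have hprop : ∀ j, p j = ((1 - m) * c / m) * q j := by
      intro j
      have hj := h j
      rw [hxdef] at hj
      have hd := (hden j).ne'
      field_simp at hj
      have : m * p j = (1 - m) * c * q j := by nlinarith [hj]
      field_simp
      nlinarith [this]
    have hsq : ∑ j, p j = ((1 - m) * c / m) * ∑ j, q j := by
      rw [Finset.mul_sum]; exact Finset.sum_congr rfl fun j _ => hprop j
    rw [hsum1, hq.2, mul_one] at hsq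
    apply hne
    funext j
    rw [hprop j, ← hsq, one_mul]
  obtain ⟨j₁, hj₁⟩ := hxne
  have hpos : 0 < ∑ j, p j * (x j - m) ^ 2 := by
    apply Finset.sum_pos' (fun j _ => mul_nonneg (hppos j).le (sq_nonneg _))
    refine ⟨j₁, Finset.mem_univ _, ?_⟩
    have hne0 : x j₁ - m ≠ 0 := sub_ne_zero.mpr hj₁
    exact mul_pos (hppos j₁) (by positivity)
  linarith [key, hpos]
end

section
/- Let 𝒳 = {1,…,n} and let P = (p_1,…,p_n) and Q = (q_1,…,q_n) be probability mass functions on 𝒳 with q_j > 0 for all j. Then the partial divergence ρ ↦ d_ρ(P‖Q) is differentiable on (0,1), and its derivative at ρ equals log(c*(ρ)·(1−ρ)/ρ), where c*(ρ) is the unique positive solution c of the equation c·Σ_{j=1}^{n} p_j q_j/(c q_j + p_j) = ρ. -/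
section AuxPD
open Real Finset
namespace PD

variable {n : ℕ}

noncomputable def phi (p q : Fin n → ℝ) (c : ℝ) : ℝ :=
  c * ∑ j, p j * q j / (c * q j + p j)

lemma phi_eq (p q : Fin n → ℝ) (c : ℝ) :
    phi p q c = ∑ j, c * (p j * q j) / (c * q j + p j) := by
  rw [phi, Finset.mul_sum]
  congr 1; ext j; ring_nf

lemma denom_pos {p q : Fin n → ℝ} (hp0 : ∀ j, 0 ≤ p j) (hqpos : ∀ j, 0 < q j)
    {c : ℝ} (hc : 0 < c) (j : Fin n) : 0 < c * q j + p j := by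
  have := hqpos j; have := hp0 j; nlinarith

-- strict monotonicity on (0, ∞)
lemma phi_strictMono {p q : Fin n → ℝ} (hp0 : ∀ j, 0 ≤ p j) (hp1 : ∑ j, p j = 1)
    (hqpos : ∀ j, 0 < q j) {c₁ c₂ : ℝ} (h1 : 0 < c₁) (h12 : c₁ < c₂) :
    phi p q c₁ < phi p q c₂ := by
  have h2 : 0 < c₂ := lt_trans h1 h12
  obtain ⟨j₀, hj₀⟩ : ∃ j, 0 < p j := by
    by_contra h
    push_neg at h
    have : ∑ j, p j = 0 := Finset.sum_eq_zero fun j _ => le_antisymm (h j) (hp0 j)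
    rw [hp1] at this; norm_num at this
  rw [phi_eq, phi_eq]
  apply Finset.sum_lt_sum
  · intro j _
    have hd1 := denom_pos hp0 hqpos h1 j
    have hd2 := denom_pos hp0 hqpos h2 j
    rw [div_le_div_iff₀ hd1 hd2]
    have h3 := hp0 j; have h4 := (hqpos j).le
    nlinarith [mul_nonneg (mul_nonneg (mul_nonneg (sub_nonneg.2 h12.le) h3) h3) h4]
  · refine ⟨j₀, Finset.mem_univ _, ?_⟩
    have hd1 := denom_pos hp0 hqpos h1 j₀
    have hd2 := denom_pos hp0 hqpos h2 j₀
    rw [div_lt_div_iff₀ hd1 hd2]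
    have hq0 := hqpos j₀
    nlinarith [mul_pos (mul_pos (mul_pos (sub_pos.2 h12) hj₀) hj₀) hq0]

end PD

namespace PD2
open PD

lemma phi_zero (p q : Fin n → ℝ) : phi p q 0 = 0 := by simp [phi]

lemma phi_contOn {p q : Fin n → ℝ} (hp0 : ∀ j, 0 ≤ p j) (hqpos : ∀ j, 0 < q j) (M : ℝ) :
    ContinuousOn (phi p q) (Set.Icc 0 M) := by
  have : ∀ c ∈ Set.Icc (0:ℝ) M, phi p q c = ∑ j, c * (p j * q j) / (c * q j + p j) :=
    fun c _ => phi_eq p q c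
  apply ContinuousOn.congr _ this
  apply continuousOn_finset_sum
  intro j _
  rcases eq_or_lt_of_le (hp0 j) with h0 | h0
  · have : (fun c : ℝ => c * (p j * q j) / (c * q j + p j)) = fun _ => (0:ℝ) := by
      funext c; rw [← h0]; simp
    rw [this]; exact continuousOn_const
  · apply ContinuousOn.div
    · fun_prop
    · fun_prop
    · intro c hc
      have := hqpos j
      have := hc.1
      positivity

lemma phi_lower {p q : Fin n → ℝ} (hp0 : ∀ j, 0 ≤ p j) (hp1 : ∑ j, p j = 1)
    (hqpos : ∀ j, 0 < q j) {c : ℝ} (hc : 0 < c) :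
    1 - (∑ j, p j ^ 2 / q j) / c ≤ phi p q c := by
  rw [phi_eq]
  have key : ∀ j, p j - (p j ^ 2 / q j) / c ≤ c * (p j * q j) / (c * q j + p j) := by
    intro j
    have hd := denom_pos hp0 hqpos hc j
    have hqj := hqpos j
    have h1 : c * (p j * q j) / (c * q j + p j) = p j - p j ^ 2 / (c * q j + p j) := by
      field_simp; ring
    rw [h1]
    have h2 : p j ^ 2 / (c * q j + p j) ≤ (p j ^ 2 / q j) / c := by
      rw [div_div]
      exact div_le_div_of_nonneg_left (by positivity) (by positivity) (by nlinarith [hp0 j])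
    linarith
  calc 1 - (∑ j, p j ^ 2 / q j) / c = ∑ j, (p j - (p j ^ 2 / q j) / c) := by
        rw [Finset.sum_sub_distrib, hp1, ← Finset.sum_div]
      _ ≤ _ := Finset.sum_le_sum fun j _ => key j

lemma phi_exists {p q : Fin n → ℝ} (hp0 : ∀ j, 0 ≤ p j) (hp1 : ∑ j, p j = 1)
    (hqpos : ∀ j, 0 < q j) {ρ : ℝ} (hρ : ρ ∈ Set.Ioo (0:ℝ) 1) :
    ∃ c : ℝ, 0 < c ∧ phi p q c = ρ := by
  obtain ⟨hρ0, hρ1⟩ := hρ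
  have hK0 : 0 ≤ ∑ j, p j ^ 2 / q j := Finset.sum_nonneg fun j _ => div_nonneg (sq_nonneg _) (hqpos j).le
  have h1ρ : 0 < 1 - ρ := by linarith
  obtain ⟨M, hM0, hMK⟩ : ∃ M : ℝ, 0 < M ∧ (∑ j, p j ^ 2 / q j) / M < 1 - ρ := by
    refine ⟨(∑ j, p j ^ 2 / q j) / (1 - ρ) + 1, ?_, ?_⟩
    · have : 0 ≤ (∑ j, p j ^ 2 / q j) / (1 - ρ) := div_nonneg hK0 h1ρ.le
      linarith
    · rw [div_lt_iff₀ (by have : 0 ≤ (∑ j, p j ^ 2 / q j) / (1 - ρ) := div_nonneg hK0 h1ρ.le; linarith)]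
      have hexp : (1 - ρ) * ((∑ j, p j ^ 2 / q j) / (1 - ρ) + 1)
          = (∑ j, p j ^ 2 / q j) + (1 - ρ) := by field_simp
      rw [mul_comm (1 - ρ)] at hexp
      rw [mul_comm, hexp]; linarith
  have hMphi : ρ ≤ phi p q M := by
    have := phi_lower hp0 hp1 hqpos hM0
    linarith
  have := intermediate_value_Icc hM0.le (phi_contOn hp0 hqpos M)
  have hmem : ρ ∈ Set.Icc (phi p q 0) (phi p q M) := by
    rw [phi_zero]; exact ⟨hρ0.le, hMphi⟩
  obtain ⟨c, hc, hceq⟩ := this hmem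
  refine ⟨c, ?_, hceq⟩
  rcases eq_or_lt_of_le hc.1 with h | h
  · exfalso; rw [← h, phi_zero] at hceq; linarith
  · exact h

end PD2

namespace PD3
open PD PD2

noncomputable def V (p q : Fin n → ℝ) (ρ c : ℝ) : ℝ :=
  ρ * Real.log c - ρ * Real.log ρ - (1 - ρ) * Real.log (1 - ρ) +
    ∑ j, p j * (Real.log (p j) - Real.log (c * q j + p j))

/-- pointwise Gibbs inequality with zero conventions -/
lemma gibbs_pt {x A t : ℝ} (hx : 0 ≤ x) (hA : 0 ≤ A) (hA0 : A = 0 → x = 0)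
    (ht0 : t = 0 → x = 0) (ht : 0 ≤ t) :
    x - A + x * Real.log (A / t) ≤ x * Real.log (x / t) := by
  rcases eq_or_lt_of_le hx with h0 | h0
  · simp [← h0]; linarith
  · have hApos : 0 < A := by
      rcases eq_or_lt_of_le hA with h | h
      · exfalso; exact absurd (hA0 h.symm) (by linarith [h0]; )
      · exact h
    have htpos : 0 < t := by
      rcases eq_or_lt_of_le ht with h | h
      · exfalso; have := ht0 h.symm; linarith
      · exact h
    have hlog : Real.log (x / t) = Real.log (x / A) + Real.log (A / t) := by
      rw [← Real.log_mul (by positivity) (by positivity)]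
      congr 1
      field_simp
    rw [hlog, mul_add]
    have key : x - A ≤ x * Real.log (x / A) := by
      have h1 : Real.log (A / x) ≤ A / x - 1 := Real.log_le_sub_one_of_pos (by positivity)
      have h2 : Real.log (x / A) = - Real.log (A / x) := by
        rw [← Real.log_inv]; congr 1; field_simp
      rw [h2]
      have h3 : x * (A / x - 1) = A - x := by field_simp
      nlinarith
    linarith

section Value

variable {p q : Fin n → ℝ} {ρ c : ℝ}

noncomputable def Af (p q : Fin n → ℝ) (ρ c : ℝ) (j : Fin n) : ℝ :=
  c * (p j * q j) / (c * q j + p j) / ρ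

noncomputable def Bf (p q : Fin n → ℝ) (ρ c : ℝ) (j : Fin n) : ℝ :=
  p j * p j / (c * q j + p j) / (1 - ρ)

variable (hp0 : ∀ j, 0 ≤ p j) (hp1 : ∑ j, p j = 1) (hqpos : ∀ j, 0 < q j)
  (hρ0 : 0 < ρ) (hρ1 : ρ < 1) (hc : 0 < c) (hphi : phi p q c = ρ)

include hp0 hqpos hc hphi in
lemma sumA' : ∑ j, c * (p j * q j) / (c * q j + p j) = ρ := by
  rw [← hphi, phi_eq]

include hp0 hp1 hqpos hc hphi in
lemma sumB' : ∑ j, p j * p j / (c * q j + p j) = 1 - ρ := by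
  have key : ∀ j, p j * p j / (c * q j + p j) = p j - c * (p j * q j) / (c * q j + p j) := by
    intro j
    have hd := denom_pos hp0 hqpos hc j
    field_simp
    ring
  rw [Finset.sum_congr rfl fun j _ => key j, Finset.sum_sub_distrib, hp1,
    sumA' hp0 hqpos hc hphi]

include hp0 hqpos hρ0 hc hphi in
lemma A_pmf : IsPMF (Af p q ρ c) := by
  constructor
  · intro j
    have hd := denom_pos hp0 hqpos hc j
    have := hp0 j; have := (hqpos j).le
    unfold Af; positivity
  · unfold Af
    rw [← Finset.sum_div, sumA' hp0 hqpos hc hphi, div_self hρ0.ne']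

include hp0 hp1 hqpos hρ1 hc hphi in
lemma B_pmf : IsPMF (Bf p q ρ c) := by
  have h1ρ : 0 < 1 - ρ := by linarith
  constructor
  · intro j
    have hd := denom_pos hp0 hqpos hc j
    have := hp0 j
    unfold Bf; positivity
  · unfold Bf
    rw [← Finset.sum_div, sumB' hp0 hp1 hqpos hc hphi, div_self h1ρ.ne']

include hp0 hqpos hρ0 hρ1 hc in
lemma AB_con : ∀ j, ρ * Af p q ρ c j + (1 - ρ) * Bf p q ρ c j = p j := by
  intro j
  have hd := denom_pos hp0 hqpos hc j
  have h1ρ : 0 < 1 - ρ := by linarith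
  unfold Af Bf
  field_simp

include hp0 hqpos hρ0 hρ1 hc in
lemma sum_linear {P₁ P₂ : Fin n → ℝ} (h1 : ∀ j, 0 ≤ P₁ j) (h2 : ∀ j, 0 ≤ P₂ j)
    (hs1 : ∑ j, P₁ j = 1) (hs2 : ∑ j, P₂ j = 1)
    (hcon : ∀ j, ρ * P₁ j + (1 - ρ) * P₂ j = p j) :
    ∑ j, (ρ * (P₁ j * Real.log (Af p q ρ c j / q j))
        + (1 - ρ) * (P₂ j * Real.log (Bf p q ρ c j / p j))) = V p q ρ c := by
  have h1ρ : 0 < 1 - ρ := by linarith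
  have per : ∀ j, ρ * (P₁ j * Real.log (Af p q ρ c j / q j))
      + (1 - ρ) * (P₂ j * Real.log (Bf p q ρ c j / p j))
      = (Real.log c - Real.log ρ) * (ρ * P₁ j)
        + (- Real.log (1 - ρ)) * ((1 - ρ) * P₂ j)
        + p j * (Real.log (p j) - Real.log (c * q j + p j)) := by
    intro j
    have hd := denom_pos hp0 hqpos hc j
    have hqj := hqpos j
    rcases eq_or_lt_of_le (hp0 j) with hpj | hpj
    · have hP1 : P₁ j = 0 := by
        have := hcon j
        have := h1 j; have := h2 j
        nlinarith [this]
      have hP2 : P₂ j = 0 := by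
        have := hcon j
        have := h1 j; have := h2 j
        nlinarith [this]
      simp [hP1, hP2, ← hpj]
    · have lA : Real.log (Af p q ρ c j / q j)
          = Real.log c + Real.log (p j) - Real.log ρ - Real.log (c * q j + p j) := by
        have hAq : Af p q ρ c j / q j = c * p j / (ρ * (c * q j + p j)) := by
          unfold Af; field_simp
        rw [hAq, Real.log_div (by positivity) (by positivity),
          Real.log_mul hc.ne' hpj.ne', Real.log_mul hρ0.ne' hd.ne']
        ring
      have lB : Real.log (Bf p q ρ c j / p j)
          = Real.log (p j) - Real.log (1 - ρ) - Real.log (c * q j + p j) := by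
        have hBp : Bf p q ρ c j / p j = p j / ((1 - ρ) * (c * q j + p j)) := by
          unfold Bf; field_simp
        rw [hBp, Real.log_div hpj.ne' (by positivity), Real.log_mul h1ρ.ne' hd.ne']
        ring
      rw [lA, lB]
      linear_combination (Real.log (p j) - Real.log (c * q j + p j)) * hcon j
  rw [Finset.sum_congr rfl fun j _ => per j]
  rw [Finset.sum_add_distrib, Finset.sum_add_distrib, ← Finset.mul_sum, ← Finset.mul_sum,
    ← Finset.mul_sum, ← Finset.mul_sum, hs1, hs2]
  unfold V
  ring

end Value

section Value2
open PD PD2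
variable {p q : Fin n → ℝ} {ρ c : ℝ}
variable (hp0 : ∀ j, 0 ≤ p j) (hp1 : ∑ j, p j = 1) (hqpos : ∀ j, 0 < q j)
  (hρ0 : 0 < ρ) (hρ1 : ρ < 1) (hc : 0 < c) (hphi : phi p q c = ρ)

include hp0 hp1 hqpos hρ0 hρ1 hc hphi in
lemma V_mem : V p q ρ c ∈ { v : ℝ | ∃ P₁ P₂ : Fin n → ℝ, IsPMF P₁ ∧ IsPMF P₂ ∧
    (∀ x, ρ * P₁ x + (1 - ρ) * P₂ x = p x) ∧
    v = ρ * KLdiv P₁ q + (1 - ρ) * KLdiv P₂ p } := by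
  have hA := A_pmf hp0 hqpos hρ0 hc hphi
  have hB := B_pmf hp0 hp1 hqpos hρ1 hc hphi
  refine ⟨Af p q ρ c, Bf p q ρ c, hA, hB, AB_con hp0 hqpos hρ0 hρ1 hc, ?_⟩
  rw [KLdiv, KLdiv, Finset.mul_sum, Finset.mul_sum, ← Finset.sum_add_distrib]
  exact (sum_linear hp0 hqpos hρ0 hρ1 hc hA.1 hB.1 hA.2 hB.2
    (AB_con hp0 hqpos hρ0 hρ1 hc)).symm

include hp0 hp1 hqpos hρ0 hρ1 hc hphi in
lemma V_lb : ∀ v ∈ { v : ℝ | ∃ P₁ P₂ : Fin n → ℝ, IsPMF P₁ ∧ IsPMF P₂ ∧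
    (∀ x, ρ * P₁ x + (1 - ρ) * P₂ x = p x) ∧
    v = ρ * KLdiv P₁ q + (1 - ρ) * KLdiv P₂ p }, V p q ρ c ≤ v := by
  rintro v ⟨P₁, P₂, h1, h2, hcon, rfl⟩
  have h1ρ : 0 < 1 - ρ := by linarith
  have hA := A_pmf hp0 hqpos hρ0 hc hphi
  have hB := B_pmf hp0 hp1 hqpos hρ1 hc hphi
  have hzero : ∀ j, p j = 0 → P₁ j = 0 ∧ P₂ j = 0 := by
    intro j hj
    have := hcon j
    have := h1.1 j; have := h2.1 j
    constructor <;> nlinarith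
  have hterm : ∀ j, ρ * (P₁ j * Real.log (Af p q ρ c j / q j))
      + (1 - ρ) * (P₂ j * Real.log (Bf p q ρ c j / p j))
      ≤ ρ * (P₁ j * Real.log (P₁ j / q j)) + (1 - ρ) * (P₂ j * Real.log (P₂ j / p j))
        - (ρ * (P₁ j - Af p q ρ c j) + (1 - ρ) * (P₂ j - Bf p q ρ c j)) := by
    intro j
    have hd := denom_pos hp0 hqpos hc j
    have g1 : P₁ j - Af p q ρ c j + P₁ j * Real.log (Af p q ρ c j / q j)
        ≤ P₁ j * Real.log (P₁ j / q j) := by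
      apply gibbs_pt (h1.1 j) (hA.1 j) _ (fun h => absurd h (hqpos j).ne') (hqpos j).le
      intro hA0
      have hpj : p j = 0 := by
        by_contra hne
        have hpj' : 0 < p j := lt_of_le_of_ne (hp0 j) (Ne.symm hne)
        have : 0 < Af p q ρ c j := by
          unfold Af
          exact div_pos (div_pos (mul_pos hc (mul_pos hpj' (hqpos j))) hd) hρ0
        rw [hA0] at this; exact lt_irrefl 0 this
      exact (hzero j hpj).1
    have g2 : P₂ j - Bf p q ρ c j + P₂ j * Real.log (Bf p q ρ c j / p j)
        ≤ P₂ j * Real.log (P₂ j / p j) := by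
      apply gibbs_pt (h2.1 j) (hB.1 j) _ _ (hp0 j)
      · intro hB0
        have hpj : p j = 0 := by
          by_contra hne
          have hpj' : 0 < p j := lt_of_le_of_ne (hp0 j) (Ne.symm hne)
          have : 0 < Bf p q ρ c j := by
            unfold Bf
            exact div_pos (div_pos (mul_pos hpj' hpj') hd) h1ρ
          rw [hB0] at this; exact lt_irrefl 0 this
        exact (hzero j hpj).2
      · intro hpj; exact (hzero j hpj).2
    nlinarith [mul_le_mul_of_nonneg_left g1 hρ0.le, mul_le_mul_of_nonneg_left g2 h1ρ.le]
  have hsum := Finset.sum_le_sum (fun j (_ : j ∈ Finset.univ) => hterm j)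
  rw [sum_linear hp0 hqpos hρ0 hρ1 hc h1.1 h2.1 h1.2 h2.2 hcon] at hsum
  have e1 : ∑ j, (ρ * (P₁ j * Real.log (P₁ j / q j)) + (1 - ρ) * (P₂ j * Real.log (P₂ j / p j)))
      = ρ * KLdiv P₁ q + (1 - ρ) * KLdiv P₂ p := by
    rw [KLdiv, KLdiv, Finset.mul_sum, Finset.mul_sum, ← Finset.sum_add_distrib]
  have e2 : ∑ j, (ρ * (P₁ j - Af p q ρ c j) + (1 - ρ) * (P₂ j - Bf p q ρ c j)) = 0 := by
    rw [Finset.sum_add_distrib, ← Finset.mul_sum, ← Finset.mul_sum,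
      Finset.sum_sub_distrib, Finset.sum_sub_distrib, h1.2, hA.2, h2.2, hB.2]
    ring
  have hside : ∑ j, (ρ * (P₁ j * Real.log (P₁ j / q j)) + (1 - ρ) * (P₂ j * Real.log (P₂ j / p j))
      - (ρ * (P₁ j - Af p q ρ c j) + (1 - ρ) * (P₂ j - Bf p q ρ c j)))
      = ρ * KLdiv P₁ q + (1 - ρ) * KLdiv P₂ p := by
    rw [Finset.sum_sub_distrib, e1, e2, sub_zero]
  rw [hside] at hsum
  exact hsum

include hp0 hp1 hqpos hρ0 hρ1 hc hphi in
lemma partialDiv_value : partialDiv ρ p q = V p q ρ c := by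
  have hmem := V_mem hp0 hp1 hqpos hρ0 hρ1 hc hphi
  have hlb := V_lb hp0 hp1 hqpos hρ0 hρ1 hc hphi
  refine le_antisymm (csInf_le ⟨_, hlb⟩ hmem) (le_csInf ⟨_, hmem⟩ hlb)

end Value2

section Calc
open PD PD2

variable {p q : Fin n → ℝ}

lemma phi_injOn {p q : Fin n → ℝ} (hp0 : ∀ j, 0 ≤ p j) (hp1 : ∑ j, p j = 1)
    (hqpos : ∀ j, 0 < q j) {c₁ c₂ : ℝ} (h1 : 0 < c₁) (h2 : 0 < c₂)
    (h : phi p q c₁ = phi p q c₂) : c₁ = c₂ := by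
  rcases lt_trichotomy c₁ c₂ with hlt | heq | hgt
  · exact absurd h (ne_of_lt (phi_strictMono hp0 hp1 hqpos h1 hlt))
  · exact heq
  · exact absurd h.symm (ne_of_lt (phi_strictMono hp0 hp1 hqpos h2 hgt))

open scoped Classical in
noncomputable def gsol (p q : Fin n → ℝ) (r : ℝ) : ℝ :=
  if h : ∃ c : ℝ, 0 < c ∧ phi p q c = r then h.choose else 1

lemma gsol_spec (hp0 : ∀ j, 0 ≤ p j) (hp1 : ∑ j, p j = 1) (hqpos : ∀ j, 0 < q j)
    {r : ℝ} (hr : r ∈ Set.Ioo (0:ℝ) 1) :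
    0 < gsol p q r ∧ phi p q (gsol p q r) = r := by
  have h := phi_exists hp0 hp1 hqpos hr
  classical
  rw [gsol]
  rw [dif_pos h]
  exact h.choose_spec

lemma hasDerivAt_phi (hp0 : ∀ j, 0 ≤ p j) (hqpos : ∀ j, 0 < q j) {c : ℝ} (hc : 0 < c) :
    HasDerivAt (phi p q) (∑ j, p j ^ 2 * q j / (c * q j + p j) ^ 2) c := by
  have hfun : phi p q = fun c => ∑ j, c * (p j * q j) / (c * q j + p j) := by
    funext c; exact phi_eq p q c
  rw [hfun]
  apply HasDerivAt.fun_sum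
  intro j _
  have hd := denom_pos hp0 hqpos hc j
  have hu : HasDerivAt (fun c : ℝ => c * (p j * q j)) (p j * q j) c := by
    simpa using (hasDerivAt_id c).mul_const (p j * q j)
  have hv : HasDerivAt (fun c : ℝ => c * q j + p j) (q j) c := by
    simpa using ((hasDerivAt_id c).mul_const (q j)).add_const (p j)
  have := hu.fun_div hv hd.ne'
  refine this.congr_deriv ?_
  field_simp
  ring

lemma phi_deriv_pos (hp0 : ∀ j, 0 ≤ p j) (hp1 : ∑ j, p j = 1) (hqpos : ∀ j, 0 < q j)
    {c : ℝ} (hc : 0 < c) : 0 < ∑ j, p j ^ 2 * q j / (c * q j + p j) ^ 2 := by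
  obtain ⟨j₀, hj₀⟩ : ∃ j, 0 < p j := by
    by_contra h
    push_neg at h
    have : ∑ j, p j = 0 := Finset.sum_eq_zero fun j _ => le_antisymm (h j) (hp0 j)
    rw [hp1] at this; norm_num at this
  apply Finset.sum_pos'
  · intro j _
    have hd := denom_pos hp0 hqpos hc j
    have := hp0 j; have := (hqpos j).le
    positivity
  · refine ⟨j₀, Finset.mem_univ _, ?_⟩
    have hd := denom_pos hp0 hqpos hc j₀
    have := hqpos j₀
    positivity

lemma gsol_continuousAt (hp0 : ∀ j, 0 ≤ p j) (hp1 : ∑ j, p j = 1) (hqpos : ∀ j, 0 < q j)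
    {ρ : ℝ} (hρ : ρ ∈ Set.Ioo (0:ℝ) 1) : ContinuousAt (gsol p q) ρ := by
  obtain ⟨hg0, hgphi⟩ := gsol_spec hp0 hp1 hqpos hρ
  set c₀ := gsol p q ρ with hc₀
  rw [Metric.continuousAt_iff]
  intro ε hε
  set ε' := min (ε / 2) (c₀ / 2) with hε'
  have hε'0 : 0 < ε' := by
    apply lt_min (by linarith) (by linarith)
  have hεε : ε' ≤ ε / 2 := min_le_left _ _
  have hε'c : ε' < c₀ := by
    have : ε' ≤ c₀ / 2 := min_le_right _ _
    linarith
  have hlo : 0 < c₀ - ε' := by linarith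
  have hplo : phi p q (c₀ - ε') < ρ := by
    rw [← hgphi]
    exact phi_strictMono hp0 hp1 hqpos hlo (by linarith)
  have hphi' : ρ < phi p q (c₀ + ε') := by
    rw [← hgphi]
    exact phi_strictMono hp0 hp1 hqpos hg0 (by linarith)
  set δ := min (min (ρ - phi p q (c₀ - ε')) (phi p q (c₀ + ε') - ρ)) (min ρ (1 - ρ)) with hδ
  have hδ0 : 0 < δ := by
    apply lt_min (lt_min (by linarith) (by linarith)) (lt_min hρ.1 (by linarith [hρ.2]))
  refine ⟨δ, hδ0, ?_⟩
  intro r hr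
  rw [Real.dist_eq] at hr
  have hb1 : δ ≤ ρ - phi p q (c₀ - ε') := le_trans (min_le_left _ _) (min_le_left _ _)
  have hb2 : δ ≤ phi p q (c₀ + ε') - ρ := le_trans (min_le_left _ _) (min_le_right _ _)
  have hb3 : δ ≤ ρ := le_trans (min_le_right _ _) (min_le_left _ _)
  have hb4 : δ ≤ 1 - ρ := le_trans (min_le_right _ _) (min_le_right _ _)
  have habs := abs_lt.1 hr
  have hrIoo : r ∈ Set.Ioo (0:ℝ) 1 := ⟨by linarith, by linarith⟩
  obtain ⟨hgr0, hgrphi⟩ := gsol_spec hp0 hp1 hqpos hrIoo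
  rw [Real.dist_eq, abs_lt]
  constructor
  · -- c₀ - ε' < gsol r  i.e. -(ε') < gsol r - c₀... we show gsol r > c₀ - ε'
    by_contra hcon
    push_neg at hcon
    have h1 : gsol p q r ≤ c₀ - ε' := by linarith
    have : phi p q (gsol p q r) ≤ phi p q (c₀ - ε') := by
      rcases eq_or_lt_of_le h1 with h | h
      · rw [h]
      · exact (phi_strictMono hp0 hp1 hqpos hgr0 h).le
    rw [hgrphi] at this
    linarith
  · by_contra hcon
    push_neg at hcon
    have h1 : c₀ + ε' ≤ gsol p q r := by linarith
    have : phi p q (c₀ + ε') ≤ phi p q (gsol p q r) := by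
      rcases eq_or_lt_of_le h1 with h | h
      · rw [h]
      · exact (phi_strictMono hp0 hp1 hqpos (by linarith) h).le
    rw [hgrphi] at this
    have : ε' ≤ ε / 2 := min_le_left _ _
    linarith
  -- leftover: nothing

end Calc

section Main
open PD PD2 PD3

theorem main (p q : Fin n → ℝ)
    (hp : IsPMF p) (hq : IsPMF q) (hqpos : ∀ j, 0 < q j) :
    ∀ ρ ∈ Set.Ioo (0 : ℝ) 1,
      (∃! c : ℝ, 0 < c ∧ c * ∑ j, p j * q j / (c * q j + p j) = ρ) ∧
      ∀ c : ℝ, 0 < c → c * ∑ j, p j * q j / (c * q j + p j) = ρ →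
        HasDerivAt (fun r : ℝ => partialDiv r p q) (Real.log (c * (1 - ρ) / ρ)) ρ := by
  obtain ⟨hp0, hp1⟩ := hp
  intro ρ hρ
  have hρ0 : 0 < ρ := hρ.1
  have hρ1 : ρ < 1 := hρ.2
  have h1ρ : 0 < 1 - ρ := by linarith
  constructor
  · obtain ⟨c, hc, hceq⟩ := phi_exists hp0 hp1 hqpos hρ
    refine ⟨c, ⟨hc, hceq⟩, ?_⟩
    rintro c' ⟨hc', hceq'⟩
    exact phi_injOn hp0 hp1 hqpos hc' hc (by simp only [phi]; rw [hceq']; exact hceq.symm)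
  · intro c hc hceq
    have hphic : phi p q c = ρ := hceq
    -- identify c with gsol
    obtain ⟨hg0, hgphi⟩ := gsol_spec hp0 hp1 hqpos hρ
    have hcg : gsol p q ρ = c := phi_injOn hp0 hp1 hqpos hg0 hc (by rw [hgphi, hphic])
    -- derivative of gsol
    set φ' := ∑ j, p j ^ 2 * q j / (c * q j + p j) ^ 2 with hφ'
    have hφ'pos : 0 < φ' := phi_deriv_pos hp0 hp1 hqpos hc
    have hgderiv : HasDerivAt (gsol p q) φ'⁻¹ ρ := by
      apply HasDerivAt.of_local_left_inverse (gsol_continuousAt hp0 hp1 hqpos hρ)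
        (by rw [hcg]; exact hasDerivAt_phi hp0 hqpos hc) hφ'pos.ne'
      have : Set.Ioo (0:ℝ) 1 ∈ nhds ρ := isOpen_Ioo.mem_nhds hρ
      filter_upwards [this] with r hr
      exact (gsol_spec hp0 hp1 hqpos hr).2
    set g' := φ'⁻¹ with hg'
    -- derivative of the closed form
    have hV : HasDerivAt (fun r : ℝ => V p q r (gsol p q r))
        (Real.log c + ρ * (g' / c) - (Real.log ρ + 1) + (Real.log (1 - ρ) + 1)
          + ∑ j, -(p j * (g' * q j / (c * q j + p j)))) ρ := by
      have hterm1 : HasDerivAt (fun r : ℝ => r * Real.log (gsol p q r))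
          (Real.log c + ρ * (g' / c)) ρ := by
        have hlog : HasDerivAt (fun r : ℝ => Real.log (gsol p q r)) (g' / c) ρ := by
          have := hgderiv.log (by rw [hcg]; exact hc.ne')
          rwa [hcg] at this
        have := (hasDerivAt_id ρ).fun_mul hlog
        simpa [hcg] using this
      have hterm2 : HasDerivAt (fun r : ℝ => r * Real.log r) (Real.log ρ + 1) ρ := by
        have := (hasDerivAt_id' ρ).fun_mul ((hasDerivAt_id' ρ).log hρ0.ne')
        refine this.congr_deriv ?_
        field_simp
      have hterm3 : HasDerivAt (fun r : ℝ => (1 - r) * Real.log (1 - r))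
          (-(Real.log (1 - ρ) + 1)) ρ := by
        have base : HasDerivAt (fun y : ℝ => y * Real.log y) (Real.log (1 - ρ) + 1) (1 - ρ) := by
          have := (hasDerivAt_id' (1 - ρ)).fun_mul ((hasDerivAt_id' (1 - ρ)).log h1ρ.ne')
          refine this.congr_deriv ?_
          field_simp
        have hin : HasDerivAt (fun r : ℝ => 1 - r) (-1 : ℝ) ρ := by
          simpa using (hasDerivAt_const ρ (1:ℝ)).fun_sub (hasDerivAt_id ρ)
        have := base.comp ρ hin
        refine this.congr_deriv ?_
        ring
      have hterm4 : HasDerivAt (fun r : ℝ => ∑ j, p j * (Real.log (p j)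
            - Real.log (gsol p q r * q j + p j)))
          (∑ j, -(p j * (g' * q j / (c * q j + p j)))) ρ := by
        apply HasDerivAt.fun_sum
        intro j _
        have hd := denom_pos hp0 hqpos hc j
        have hu : HasDerivAt (fun r : ℝ => gsol p q r * q j + p j) (g' * q j) ρ :=
          (hgderiv.mul_const (q j)).add_const (p j)
        have hlog : HasDerivAt (fun r : ℝ => Real.log (gsol p q r * q j + p j))
            (g' * q j / (c * q j + p j)) ρ := by
          have := hu.log (by rw [hcg]; exact hd.ne')
          rwa [hcg] at this
        have := ((hasDerivAt_const ρ (Real.log (p j))).fun_sub hlog).const_mul (p j)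
        refine this.congr_deriv ?_
        ring
      have hcomb := ((hterm1.fun_sub hterm2).fun_sub hterm3).fun_add hterm4
      have hfun : (fun r : ℝ => V p q r (gsol p q r))
          = fun r : ℝ => r * Real.log (gsol p q r) - r * Real.log r
            - (1 - r) * Real.log (1 - r)
            + ∑ j, p j * (Real.log (p j) - Real.log (gsol p q r * q j + p j)) := by
        funext r; rw [V]
      rw [hfun]
      refine hcomb.congr_deriv ?_
      ring
    have hS : ∑ j, p j * q j / (c * q j + p j) = ρ / c := by
      rw [eq_div_iff hc.ne', mul_comm]
      exact hceq
    have hsum' : ∑ j, -(p j * (g' * q j / (c * q j + p j))) = -(g' * (ρ / c)) := by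
      rw [Finset.sum_congr rfl (fun j (_ : j ∈ Finset.univ) =>
        (by ring : -(p j * (g' * q j / (c * q j + p j))) = (-g') * (p j * q j / (c * q j + p j)))),
        ← Finset.mul_sum, hS]
      ring
    have hD : Real.log c + ρ * (g' / c) - (Real.log ρ + 1) + (Real.log (1 - ρ) + 1)
        + ∑ j, -(p j * (g' * q j / (c * q j + p j))) = Real.log (c * (1 - ρ) / ρ) := by
      rw [hsum', Real.log_div (by positivity) hρ0.ne', Real.log_mul hc.ne' h1ρ.ne']
      ring
    have hEq : (fun r : ℝ => partialDiv r p q) =ᶠ[nhds ρ] fun r => V p q r (gsol p q r) := by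
      filter_upwards [isOpen_Ioo.mem_nhds hρ] with r hr
      obtain ⟨hh1, hh2⟩ := gsol_spec hp0 hp1 hqpos hr
      exact partialDiv_value hp0 hp1 hqpos hr.1 hr.2 hh1 hh2
    rw [← hD]
    exact hV.congr_of_eventuallyEq hEq
end Main

end PD3

end AuxPD

/-- On `(0,1)` the partial divergence `ρ ↦ d_ρ(P‖Q)` is differentiable with derivative
`log (c*(ρ)·(1−ρ)/ρ)`, where `c*(ρ)` is the unique positive solution of
`c · Σ_j p_j q_j/(c q_j + p_j) = ρ`. -/


theorem partialDiv_hasDerivAt (n : ℕ) (p q : Fin n → ℝ)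
    (hp : IsPMF p) (hq : IsPMF q) (hqpos : ∀ j, 0 < q j) :
    ∀ ρ ∈ Set.Ioo (0 : ℝ) 1,
      (∃! c : ℝ, 0 < c ∧ c * ∑ j, p j * q j / (c * q j + p j) = ρ) ∧
      ∀ c : ℝ, 0 < c → c * ∑ j, p j * q j / (c * q j + p j) = ρ →
        HasDerivAt (fun r : ℝ => partialDiv r p q) (Real.log (c * (1 - ρ) / ρ)) ρ := by
  exact PD3.main p q hp hq hqpos
end

section
/- Let 𝒳 be a finite alphabet, let Q and Q' be probability mass functions on 𝒳, and let k ≥ 1 and 0 ≤ m ≤ k be integers. Let X = (X_1,…,X_k) be independent random variables with X_i distributed according to Q for 1 ≤ i ≤ m and according to Q' for m < i ≤ k. Let P be a k-type on 𝒳, i.e., a PMF such that k·P(x) is an integer for every x. Then ℙ( P̂_X = P ) ≤ (k+1)^{|𝒳|} · exp( −k · d(P,Q,Q',m/k) ), where d(P,Q,Q',ρ) := inf { ρ·D(P₁‖Q) + (1−ρ)·D(P₂‖Q') : P₁, P₂ PMFs on 𝒳 with ρ·P₁ + (1−ρ)·P₂ = P }. -/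
/-- Kullback–Leibler divergence with values in `[−∞,∞]` (natural logarithm), with the
conventions `0 · log (0/q) = 0` and `D(P‖Q) = ⊤` if `P(x) > 0 = Q(x)` for some `x`. -/
noncomputable def KLdivE {X : Type*} [Fintype X] (P Q : X → ℝ) : EReal :=
  if ∃ x, 0 < P x ∧ Q x = 0 then ⊤
  else ((∑ x, P x * Real.log (P x / Q x) : ℝ) : EReal)

/-- Mixed divergence exponent
`d(P,Q,Q',ρ) = inf { ρ·D(P₁‖Q) + (1−ρ)·D(P₂‖Q') : ρ·P₁ + (1−ρ)·P₂ = P }`. -/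
noncomputable def mixDivE {X : Type*} [Fintype X] (P Q Q' : X → ℝ) (ρ : ℝ) : EReal :=
  sInf { v : EReal | ∃ P₁ P₂ : X → ℝ, IsPMF P₁ ∧ IsPMF P₂ ∧
    (∀ x, ρ * P₁ x + (1 - ρ) * P₂ x = P x) ∧
    v = (ρ : EReal) * KLdivE P₁ Q + ((1 - ρ : ℝ) : EReal) * KLdivE P₂ Q' }


private lemma prod_count {X : Type*} [Fintype X] [DecidableEq X] {k : ℕ}
    (s : Finset (Fin k)) (f : X → ℝ) (x : Fin k → X) :
    ∏ i ∈ s, f (x i) = ∏ a : X, f a ^ (s.filter fun i => x i = a).card := by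
  rw [← Finset.prod_fiberwise_of_maps_to (g := x) (t := Finset.univ)
    (fun i _ => Finset.mem_univ (x i)) (fun i => f (x i))]
  refine Finset.prod_congr rfl fun a _ => ?_
  calc ∏ i ∈ s.filter fun i => x i = a, f (x i)
      = ∏ i ∈ s.filter fun i => x i = a, f a :=
        Finset.prod_congr rfl fun i hi => by rw [(Finset.mem_filter.1 hi).2]
    _ = _ := Finset.prod_const _

private lemma card_filter_val_lt {k m : ℕ} (hm : m ≤ k) :
    ((Finset.univ : Finset (Fin k)).filter fun i : Fin k => (i : ℕ) < m).card = m := by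
  have h : ((Finset.univ : Finset (Fin k)).filter fun i : Fin k => (i : ℕ) < m)
      = Finset.image (Fin.castLE hm) Finset.univ := by
    ext i
    simp only [Finset.mem_filter, Finset.mem_univ, true_and, Finset.mem_image]
    constructor
    · intro h; exact ⟨⟨(i : ℕ), h⟩, by ext; rfl⟩
    · rintro ⟨j, -, rfl⟩; exact j.isLt
  rw [h, Finset.card_image_of_injective _ (Fin.castLE_injective hm), Finset.card_univ,
    Fintype.card_fin]

private lemma filter_swap {α : Type*} (s : Finset α) (p q : α → Prop)
    [DecidablePred p] [DecidablePred q] :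
    s.filter (fun i => p i ∧ q i) = s.filter (fun i => q i ∧ p i) := by
  ext i; simp only [Finset.mem_filter]; tauto

private lemma half_bound {X : Type*} [Fintype X] (n : X → ℕ) (M : ℕ) (P₁ Q : X → ℝ)
    (h1 : ∀ a, 0 < n a → 0 < Q a)
    (h2 : ∀ a, (M : ℝ) * P₁ a = (n a : ℝ))
    (h4 : ∀ a, 0 < n a → 0 < P₁ a) :
    ∏ a, Q a ^ n a
      = Real.exp (-((M : ℝ) * ∑ a, P₁ a * Real.log (P₁ a / Q a))) * ∏ a, P₁ a ^ n a := by
  have key : ∀ a, -((M : ℝ) * (P₁ a * Real.log (P₁ a / Q a)))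
      = (n a : ℝ) * Real.log (Q a / P₁ a) := by
    intro a
    by_cases h : n a = 0
    · have h2a := h2 a
      rw [h] at h2a
      push_cast at h2a ⊢
      rw [h, show (M : ℝ) * (P₁ a * Real.log (P₁ a / Q a))
          = ((M : ℝ) * P₁ a) * Real.log (P₁ a / Q a) from by ring, h2a]
      simp
    · have hn : 0 < n a := Nat.pos_of_ne_zero h
      have hQa := h1 a hn
      have hpa := h4 a hn
      rw [Real.log_div hpa.ne' hQa.ne', Real.log_div hQa.ne' hpa.ne', ← h2 a]
      ring
  have step : ∀ a, Q a ^ n a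
      = Real.exp ((n a : ℝ) * Real.log (Q a / P₁ a)) * P₁ a ^ n a := by
    intro a
    by_cases h : n a = 0
    · simp [h]
    · have hn : 0 < n a := Nat.pos_of_ne_zero h
      have hQa := h1 a hn
      have hpa := h4 a hn
      rw [Real.exp_nat_mul, Real.exp_log (div_pos hQa hpa), ← mul_pow,
        div_mul_cancel₀ _ hpa.ne']
  calc ∏ a, Q a ^ n a
      = ∏ a, (Real.exp ((n a : ℝ) * Real.log (Q a / P₁ a)) * P₁ a ^ n a) :=
        Finset.prod_congr rfl fun a _ => step a
    _ = Real.exp (∑ a, (n a : ℝ) * Real.log (Q a / P₁ a)) * ∏ a, P₁ a ^ n a := by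
        rw [Finset.prod_mul_distrib, ← Real.exp_sum]
    _ = _ := by
        congr 1
        congr 1
        rw [Finset.mul_sum, ← Finset.sum_neg_distrib]
        exact Finset.sum_congr rfl fun a _ => (key a).symm

/-- Upper bound on the probability that a sequence of `k` independent symbols,
the first `m` distributed according to `Q` and the rest according to `Q'`, has empirical
distribution exactly the `k`-type `P`:
`ℙ(type = P) ≤ (k+1)^{|𝒳|} · exp(−k · d(P,Q,Q',m/k))`.
(The bound is stated for every real `r ≤ d(P,Q,Q',m/k)`, which is equivalent and also
covers the case where the exponent is infinite.) -/
theorem type_prob_upper_bound {X : Type*} [Fintype X] [DecidableEq X]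
    (Q Q' : X → ℝ) (hQ : IsPMF Q) (hQ' : IsPMF Q')
    (k m : ℕ) (hk : 1 ≤ k) (hm : m ≤ k)
    (P : X → ℝ) (hP : IsPMF P) (htype : ∀ a, ∃ c : ℕ, (k : ℝ) * P a = c) :
    ∀ r : ℝ, (r : EReal) ≤ mixDivE P Q Q' ((m : ℝ) / k) →
      (∑ x : Fin k → X,
        if ∀ a, (((Finset.univ.filter fun i => x i = a).card : ℝ) / k = P a)
        then ∏ i : Fin k, (if (i : ℕ) < m then Q (x i) else Q' (x i)) else 0)
      ≤ ((k : ℝ) + 1) ^ (Fintype.card X) * Real.exp (-(k : ℝ) * r) := by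
  classical
  intro r hr
  have hk0 : (k : ℝ) ≠ 0 := Nat.cast_ne_zero.2 (by omega)
  have hkpos : (0 : ℝ) < k := by exact_mod_cast Nat.pos_of_ne_zero (by omega)
  set g : (Fin k → X) → ℝ := fun x =>
    if ∀ a, (((Finset.univ.filter fun i => x i = a).card : ℝ) / k = P a)
    then ∏ i : Fin k, (if (i : ℕ) < m then Q (x i) else Q' (x i)) else 0 with hg
  have hφlt : ∀ (x : Fin k → X) (a : X),
      ((Finset.univ.filter fun i : Fin k => (i : ℕ) < m ∧ x i = a).card) < k + 1 :=
    fun x a => Nat.lt_succ_of_le ((Finset.card_filter_le _ _).trans (by simp))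
  set φ : (Fin k → X) → (X → Fin (k + 1)) := fun x a => ⟨_, hφlt x a⟩ with hφ
  have key : ∀ c : X → Fin (k + 1),
      ∑ x ∈ Finset.univ.filter (fun x : Fin k → X => φ x = c), g x
        ≤ Real.exp (-(k : ℝ) * r) := by
    intro c
    set B : Finset (Fin k → X) :=
      (Finset.univ.filter (fun x : Fin k → X => φ x = c)).filter
        (fun x => ∀ a, (((Finset.univ.filter fun i => x i = a).card : ℝ) / k = P a)) with hB
    have hsum_eq : ∑ x ∈ Finset.univ.filter (fun x : Fin k → X => φ x = c), g x
        = ∑ x ∈ B, ∏ i : Fin k, (if (i : ℕ) < m then Q (x i) else Q' (x i)) := by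
      simp only [hg]
      rw [hB]
      exact (Finset.sum_filter _ _).symm
    rw [hsum_eq]
    rcases B.eq_empty_or_nonempty with hBe | ⟨x₀, hx₀⟩
    · rw [hBe, Finset.sum_empty]; exact (Real.exp_pos _).le
    have hmemB : ∀ x ∈ B,
        (∀ a, ((Finset.univ.filter fun i : Fin k => (i : ℕ) < m ∧ x i = a).card) = (c a : ℕ))
        ∧ (∀ a, (((Finset.univ.filter fun i : Fin k => x i = a).card : ℝ)) = k * P a) := by
      intro x hx
      rw [hB, Finset.mem_filter, Finset.mem_filter] at hx
      obtain ⟨⟨-, hxc⟩, hxt⟩ := hx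
      refine ⟨fun a => congrArg Fin.val (congrFun hxc a), fun a => ?_⟩
      have h := hxt a
      rw [div_eq_iff hk0] at h
      rw [h]; ring
    have hx₀mem := hmemB x₀ hx₀
    set n1 : X → ℕ := fun a => ((c a : ℕ)) with hn1
    set n2 : X → ℕ :=
      fun a => (Finset.univ.filter fun i : Fin k => ¬((i : ℕ) < m) ∧ x₀ i = a).card with hn2
    have hsplit : ∀ (x : Fin k → X) (a : X),
        (Finset.univ.filter fun i : Fin k => (i : ℕ) < m ∧ x i = a).card
        + (Finset.univ.filter fun i : Fin k => ¬((i : ℕ) < m) ∧ x i = a).card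
        = (Finset.univ.filter fun i : Fin k => x i = a).card := by
      intro x a
      rw [filter_swap _ (fun i : Fin k => (i : ℕ) < m) (fun i => x i = a),
          filter_swap _ (fun i : Fin k => ¬((i : ℕ) < m)) (fun i => x i = a),
          ← Finset.filter_filter, ← Finset.filter_filter]
      exact Finset.card_filter_add_card_filter_not _
    have htotconst : ∀ x ∈ B, ∀ a,
        (Finset.univ.filter fun i : Fin k => x i = a).card
        = (Finset.univ.filter fun i : Fin k => x₀ i = a).card := by
      intro x hx a
      have h1 := (hmemB x hx).2 a
      have h2 := hx₀mem.2 a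
      exact_mod_cast h1.trans h2.symm
    have hn2const : ∀ x ∈ B, ∀ a,
        (Finset.univ.filter fun i : Fin k => ¬((i : ℕ) < m) ∧ x i = a).card = n2 a := by
      intro x hx a
      have e1 := hsplit x a
      have e2 := hsplit x₀ a
      rw [(hmemB x hx).1 a] at e1
      rw [hx₀mem.1 a] at e2
      rw [htotconst x hx a] at e1
      simp only [hn2]
      omega
    have hn1sum : ∑ a, n1 a = m := by
      have hfib := Finset.card_eq_sum_card_fiberwise
        (f := x₀) (s := Finset.univ.filter fun i : Fin k => (i : ℕ) < m) (t := Finset.univ)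
        (fun i _ => Finset.mem_univ (x₀ i))
      rw [card_filter_val_lt hm] at hfib
      rw [hfib]
      refine Finset.sum_congr rfl fun a _ => ?_
      simp only [hn1]
      rw [← hx₀mem.1 a, Finset.filter_filter]
    have hTsum : ∑ a, (Finset.univ.filter fun i : Fin k => x₀ i = a).card = k := by
      have hfib := Finset.card_eq_sum_card_fiberwise
        (f := x₀) (s := (Finset.univ : Finset (Fin k))) (t := Finset.univ)
        (fun i _ => Finset.mem_univ (x₀ i))
      rw [Finset.card_univ, Fintype.card_fin] at hfib
      exact hfib.symm
    have h12sum : (∑ a, n1 a) + (∑ a, n2 a) = k := by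
      rw [← Finset.sum_add_distrib, ← hTsum]
      refine Finset.sum_congr rfl fun a _ => ?_
      simp only [hn1, hn2]
      rw [← hx₀mem.1 a]
      exact hsplit x₀ a
    have hn2sum : ∑ a, n2 a = k - m := by omega
    have hn1le : ∀ a, n1 a ≤ m :=
      fun a => hn1sum ▸ Finset.single_le_sum (f := n1) (fun _ _ => Nat.zero_le _) (Finset.mem_univ a)
    have hn2le : ∀ a, n2 a ≤ k - m :=
      fun a => hn2sum ▸ Finset.single_le_sum (f := n2) (fun _ _ => Nat.zero_le _) (Finset.mem_univ a)
    have hm0n1 : m = 0 → ∀ a, n1 a = 0 := fun h a => by have := hn1le a; omega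
    have hmkn2 : m = k → ∀ a, n2 a = 0 := fun h a => by have := hn2le a; omega
    set ρ : ℝ := (m : ℝ) / k with hρ
    set P₁ : X → ℝ := fun a => if m = 0 then Q a else (n1 a : ℝ) / m with hP₁
    set P₂ : X → ℝ := fun a => if m = k then Q' a else (n2 a : ℝ) / ((k : ℝ) - m) with hP₂
    have hkm_pos : m ≠ k → (0 : ℝ) < (k : ℝ) - m := by
      intro h
      have : m < k := lt_of_le_of_ne hm h
      have : (m : ℝ) < k := by exact_mod_cast this
      linarith
    have hP₁pmf : IsPMF P₁ := by
      constructor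
      · intro a
        simp only [hP₁]
        split_ifs with h
        · exact hQ.1 a
        · positivity
      · simp only [hP₁]
        split_ifs with h
        · exact hQ.2
        · rw [← Finset.sum_div, ← Nat.cast_sum, hn1sum]
          exact div_self (Nat.cast_ne_zero.2 h)
    have hP₂pmf : IsPMF P₂ := by
      constructor
      · intro a
        simp only [hP₂]
        split_ifs with h
        · exact hQ'.1 a
        · exact div_nonneg (Nat.cast_nonneg _) (hkm_pos h).le
      · simp only [hP₂]
        split_ifs with h
        · exact hQ'.2
        · rw [← Finset.sum_div, ← Nat.cast_sum, hn2sum, Nat.cast_sub hm]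
          exact div_self (hkm_pos h).ne'
    have hMn1 : ∀ a, (m : ℝ) * P₁ a = (n1 a : ℝ) := by
      intro a
      simp only [hP₁]
      split_ifs with h
      · simp [h, hm0n1 h a]
      · have hmo : (m : ℝ) ≠ 0 := Nat.cast_ne_zero.2 h
        field_simp
    have hMn2 : ∀ a, ((k - m : ℕ) : ℝ) * P₂ a = (n2 a : ℝ) := by
      intro a
      simp only [hP₂]
      split_ifs with h
      · simp [h, hmkn2 h a]
      · rw [Nat.cast_sub hm]
        field_simp
        exact mul_div_cancel_left₀ _ (hkm_pos h).ne'
    have hmix : ∀ a, ρ * P₁ a + (1 - ρ) * P₂ a = P a := by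
      intro a
      have eN : n1 a + n2 a = (Finset.univ.filter fun i : Fin k => x₀ i = a).card := by
        simp only [hn1, hn2]
        rw [← hx₀mem.1 a]
        exact hsplit x₀ a
      have h12 : (n1 a : ℝ) + (n2 a : ℝ) = (k : ℝ) * P a := by
        have e2 := hx₀mem.2 a
        rw [← eN] at e2
        push_cast at e2
        exact e2
      have e1 : ρ * P₁ a = (n1 a : ℝ) / k := by
        rw [hρ, div_mul_eq_mul_div, hMn1 a]
      have e2 : (1 - ρ) * P₂ a = (n2 a : ℝ) / k := by
        have hkm : (1 - ρ) = ((k - m : ℕ) : ℝ) / k := by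
          rw [hρ, Nat.cast_sub hm]
          field_simp
        rw [hkm, div_mul_eq_mul_div, hMn2 a]
      rw [e1, e2, ← add_div, h12, mul_div_cancel_left₀ _ hk0]
    have hrv : (r : EReal)
        ≤ (ρ : EReal) * KLdivE P₁ Q + ((1 - ρ : ℝ) : EReal) * KLdivE P₂ Q' := by
      refine hr.trans ?_
      simp only [mixDivE]
      exact sInf_le ⟨P₁, P₂, hP₁pmf, hP₂pmf, hmix, rfl⟩
    by_cases hbad1 : ∃ a, 0 < P₁ a ∧ Q a = 0
    · obtain ⟨a, hpa, hqa⟩ := hbad1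
      have hm0 : m ≠ 0 := by
        intro h
        simp only [hP₁, h, if_true] at hpa
        exact hpa.ne' hqa
      have hn1a : 0 < n1 a := by
        by_contra hcon
        have h0 : n1 a = 0 := by omega
        simp [hP₁, hm0, h0] at hpa
      have hz : ∀ x ∈ B, (∏ i : Fin k, (if (i : ℕ) < m then Q (x i) else Q' (x i))) = 0 := by
        intro x hx
        have hcard : 0 < (Finset.univ.filter fun i : Fin k => (i : ℕ) < m ∧ x i = a).card := by
          rw [(hmemB x hx).1 a]
          exact hn1a
        obtain ⟨i, hi⟩ := Finset.card_pos.1 hcard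
        rw [Finset.mem_filter] at hi
        exact Finset.prod_eq_zero (Finset.mem_univ i) (by rw [if_pos hi.2.1, hi.2.2, hqa])
      rw [Finset.sum_eq_zero hz]
      exact (Real.exp_pos _).le
    by_cases hbad2 : ∃ a, 0 < P₂ a ∧ Q' a = 0
    · obtain ⟨a, hpa, hqa⟩ := hbad2
      have hmk : m ≠ k := by
        intro h
        simp only [hP₂, h, if_true] at hpa
        exact hpa.ne' hqa
      have hn2a : 0 < n2 a := by
        by_contra hcon
        have h0 : n2 a = 0 := by omega
        simp [hP₂, hmk, h0] at hpa
      have hz : ∀ x ∈ B, (∏ i : Fin k, (if (i : ℕ) < m then Q (x i) else Q' (x i))) = 0 := by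
        intro x hx
        have hcard : 0 < (Finset.univ.filter fun i : Fin k => ¬((i : ℕ) < m) ∧ x i = a).card := by
          rw [hn2const x hx a]
          exact hn2a
        obtain ⟨i, hi⟩ := Finset.card_pos.1 hcard
        rw [Finset.mem_filter] at hi
        exact Finset.prod_eq_zero (Finset.mem_univ i) (by rw [if_neg hi.2.1, hi.2.2, hqa])
      rw [Finset.sum_eq_zero hz]
      exact (Real.exp_pos _).le
    -- main case
    push_neg at hbad1 hbad2
    set D₁ : ℝ := ∑ a, P₁ a * Real.log (P₁ a / Q a) with hD₁
    set D₂ : ℝ := ∑ a, P₂ a * Real.log (P₂ a / Q' a) with hD₂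
    have hKL1 : KLdivE P₁ Q = ((D₁ : ℝ) : EReal) := by
      rw [KLdivE, if_neg]
      push_neg
      exact fun a h => hbad1 a h
    have hKL2 : KLdivE P₂ Q' = ((D₂ : ℝ) : EReal) := by
      rw [KLdivE, if_neg]
      push_neg
      exact fun a h => hbad2 a h
    rw [hKL1, hKL2, ← EReal.coe_mul, ← EReal.coe_mul, ← EReal.coe_add,
      EReal.coe_le_coe_iff] at hrv
    have hQpos : ∀ a, 0 < n1 a → 0 < Q a := by
      intro a ha
      have hm0 : m ≠ 0 := by
        intro h
        rw [hm0n1 h a] at ha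
        exact absurd ha (lt_irrefl 0)
      have hp : 0 < P₁ a := by
        simp only [hP₁, if_neg hm0]
        have hmpos : (0 : ℝ) < m := by exact_mod_cast Nat.pos_of_ne_zero hm0
        exact div_pos (by exact_mod_cast ha) hmpos
      exact lt_of_le_of_ne (hQ.1 a) (Ne.symm (hbad1 a hp))
    have hP1pos : ∀ a, 0 < n1 a → 0 < P₁ a := by
      intro a ha
      have hm0 : m ≠ 0 := by
        intro h
        rw [hm0n1 h a] at ha
        exact absurd ha (lt_irrefl 0)
      simp only [hP₁, if_neg hm0]
      have hmpos : (0 : ℝ) < m := by exact_mod_cast Nat.pos_of_ne_zero hm0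
      exact div_pos (by exact_mod_cast ha) hmpos
    have hQ'pos : ∀ a, 0 < n2 a → 0 < Q' a := by
      intro a ha
      have hmk : m ≠ k := by
        intro h
        rw [hmkn2 h a] at ha
        exact absurd ha (lt_irrefl 0)
      have hp : 0 < P₂ a := by
        simp only [hP₂, if_neg hmk]
        exact div_pos (by exact_mod_cast ha) (hkm_pos hmk)
      exact lt_of_le_of_ne (hQ'.1 a) (Ne.symm (hbad2 a hp))
    have hP2pos : ∀ a, 0 < n2 a → 0 < P₂ a := by
      intro a ha
      have hmk : m ≠ k := by
        intro h
        rw [hmkn2 h a] at ha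
        exact absurd ha (lt_irrefl 0)
      simp only [hP₂, if_neg hmk]
      exact div_pos (by exact_mod_cast ha) (hkm_pos hmk)
    have h1eq := half_bound n1 m P₁ Q hQpos hMn1 hP1pos
    have h2eq := half_bound n2 (k - m) P₂ Q' hQ'pos hMn2 hP2pos
    rw [← hD₁] at h1eq
    rw [← hD₂] at h2eq
    set K : ℝ := (∏ a, P₁ a ^ n1 a) * ∏ a, P₂ a ^ n2 a with hK
    have hKpos : 0 < K := by
      rw [hK]
      apply mul_pos
      · apply Finset.prod_pos
        intro a _
        rcases Nat.eq_zero_or_pos (n1 a) with h | h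
        · simp [h]
        · exact pow_pos (hP1pos a h) _
      · apply Finset.prod_pos
        intro a _
        rcases Nat.eq_zero_or_pos (n2 a) with h | h
        · simp [h]
        · exact pow_pos (hP2pos a h) _
    have hwconst : ∀ x ∈ B,
        (∏ i : Fin k, (if (i : ℕ) < m then Q (x i) else Q' (x i)))
        = (∏ a, Q a ^ n1 a) * ∏ a, Q' a ^ n2 a := by
      intro x hx
      rw [Finset.prod_ite _ _]
      congr 1
      · rw [prod_count]
        refine Finset.prod_congr rfl fun a _ => ?_
        congr 1
        rw [Finset.filter_filter]
        exact (hmemB x hx).1 a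
      · rw [prod_count]
        refine Finset.prod_congr rfl fun a _ => ?_
        congr 1
        rw [Finset.filter_filter]
        exact hn2const x hx a
    have hpconst : ∀ x ∈ B,
        (∏ i : Fin k, (if (i : ℕ) < m then P₁ (x i) else P₂ (x i))) = K := by
      intro x hx
      rw [hK, Finset.prod_ite _ _]
      congr 1
      · rw [prod_count]
        refine Finset.prod_congr rfl fun a _ => ?_
        congr 1
        rw [Finset.filter_filter]
        exact (hmemB x hx).1 a
      · rw [prod_count]
        refine Finset.prod_congr rfl fun a _ => ?_
        congr 1
        rw [Finset.filter_filter]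
        exact hn2const x hx a
    have hsum1 : ∑ x : Fin k → X,
        (∏ i : Fin k, (if (i : ℕ) < m then P₁ (x i) else P₂ (x i))) = 1 := by
      rw [← Fintype.prod_sum (f := fun (i : Fin k) (a : X) => if (i : ℕ) < m then P₁ a else P₂ a)]
      rw [Finset.prod_eq_one]
      intro i _
      by_cases h : (i : ℕ) < m <;> simp [h, hP₁pmf.2, hP₂pmf.2]
    have hBK : (B.card : ℝ) * K ≤ 1 := by
      have e1 : (B.card : ℝ) * K
          = ∑ x ∈ B, (∏ i : Fin k, (if (i : ℕ) < m then P₁ (x i) else P₂ (x i))) := by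
        rw [Finset.sum_congr rfl hpconst, Finset.sum_const, nsmul_eq_mul]
      rw [e1]
      refine le_trans (Finset.sum_le_sum_of_subset_of_nonneg (Finset.subset_univ B) ?_) hsum1.le
      intro x _ _
      apply Finset.prod_nonneg
      intro i _
      by_cases h : (i : ℕ) < m <;> simp [h, hP₁pmf.1, hP₂pmf.1]
    have hcalc : ∑ x ∈ B, (∏ i : Fin k, (if (i : ℕ) < m then Q (x i) else Q' (x i)))
        = (B.card : ℝ) * ((∏ a, Q a ^ n1 a) * ∏ a, Q' a ^ n2 a) := by
      rw [Finset.sum_congr rfl hwconst, Finset.sum_const, nsmul_eq_mul]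
    rw [hcalc, h1eq, h2eq]
    have hfinal : (B.card : ℝ) * ((Real.exp (-((m : ℝ) * D₁)) * ∏ a, P₁ a ^ n1 a)
        * (Real.exp (-(((k - m : ℕ) : ℝ) * D₂)) * ∏ a, P₂ a ^ n2 a))
        = ((B.card : ℝ) * K)
          * (Real.exp (-((m : ℝ) * D₁)) * Real.exp (-(((k - m : ℕ) : ℝ) * D₂))) := by
      rw [hK]; ring
    rw [hfinal, ← Real.exp_add]
    have hexple : Real.exp (-((m : ℝ) * D₁) + -(((k - m : ℕ) : ℝ) * D₂))
        ≤ Real.exp (-(k : ℝ) * r) := by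
      apply Real.exp_le_exp.2
      have e : (k : ℝ) * (ρ * D₁ + (1 - ρ) * D₂) = (m : ℝ) * D₁ + ((k : ℝ) - m) * D₂ := by
        rw [hρ]; field_simp
      have h2 := mul_le_mul_of_nonneg_left hrv (le_of_lt hkpos)
      rw [e] at h2
      rw [Nat.cast_sub hm]
      linarith
    calc ((B.card : ℝ) * K) * Real.exp (-((m : ℝ) * D₁) + -(((k - m : ℕ) : ℝ) * D₂))
        ≤ 1 * Real.exp (-((m : ℝ) * D₁) + -(((k - m : ℕ) : ℝ) * D₂)) :=
          mul_le_mul_of_nonneg_right hBK (Real.exp_pos _).le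
      _ ≤ _ := by rw [one_mul]; exact hexple
  calc (∑ x : Fin k → X, g x)
      = ∑ c : X → Fin (k + 1), ∑ x ∈ Finset.univ.filter (fun x => φ x = c), g x :=
        (Finset.sum_fiberwise _ _ _).symm
    _ ≤ (Finset.univ : Finset (X → Fin (k + 1))).card • Real.exp (-(k : ℝ) * r) :=
        Finset.sum_le_card_nsmul _ _ _ (fun c _ => key c)
    _ = ((k : ℝ) + 1) ^ (Fintype.card X) * Real.exp (-(k : ℝ) * r) := by
        rw [nsmul_eq_mul, Finset.card_univ, Fintype.card_fun, Fintype.card_fin]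
        push_cast
        ring
end

section
/- Let 𝒳 be a finite alphabet, let Q and Q' be probability mass functions on 𝒳, and let k ≥ 1 and 0 ≤ m ≤ k be integers. Let X = (X_1,…,X_k) be independent random variables with X_i distributed according to Q for 1 ≤ i ≤ m and according to Q' for m < i ≤ k. Let P₁ be an m-type and P₂ a (k−m)-type on 𝒳 (i.e., m·P₁(x) and (k−m)·P₂(x) are integers for all x), and let P be the PMF determined by k·P = m·P₁ + (k−m)·P₂. Then ℙ( P̂_X = P ) ≥ (k+1)^{−2|𝒳|} · exp( −( m·D(P₁‖Q) + (k−m)·D(P₂‖Q') ) ). -/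
open Finset Nat
set_option linter.unusedSectionVars false
set_option linter.unusedVariables false
set_option maxHeartbeats 1000000

section Aux
variable {X : Type*} [Fintype X] [DecidableEq X]


def cnt {n : ℕ} (y : Fin n → X) (a : X) : ℕ := (Finset.univ.filter fun i => y i = a).card

def Sset (n : ℕ) (v : X → ℕ) : Finset (Fin n → X) :=
  Finset.univ.filter (fun y => cnt y = v)

lemma cnt_cons {n : ℕ} (a : X) (y : Fin n → X) (b : X) :
    cnt (Fin.cons a y) b = (if a = b then 1 else 0) + cnt y b := by
  simp only [cnt, Finset.card_filter]
  rw [Fin.sum_univ_succ]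
  simp [Fin.cons]
  rw [Finset.card_filter]
  convert rfl <;> split_ifs <;> simp_all

lemma sum_cnt {n : ℕ} (y : Fin n → X) : ∑ a, cnt y a = n := by
  classical
  have := Finset.card_eq_sum_card_fiberwise (s := (univ : Finset (Fin n)))
    (t := (univ : Finset X)) (f := y) (fun i _ => mem_univ _)
  simpa [cnt, Fintype.card_fin] using this.symm

lemma cnt_le {n : ℕ} (y : Fin n → X) (a : X) : cnt y a ≤ n := by
  simpa [cnt, Fintype.card_fin] using Finset.card_filter_le (univ : Finset (Fin n)) (fun i => y i = a)

lemma prod_comp_cnt {M : Type*} [CommMonoid M] {n : ℕ} (y : Fin n → X) (f : X → M) :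
    ∏ i, f (y i) = ∏ a, f a ^ cnt y a := by
  classical
  rw [← Finset.prod_fiberwise_of_maps_to (g := y) (t := (univ : Finset X))
      (fun i _ => mem_univ _) (fun i => f (y i))]
  refine Finset.prod_congr rfl fun a _ => ?_
  rw [Finset.prod_congr rfl (fun i hi => by rw [(mem_filter.1 hi).2]), Finset.prod_const, cnt]

lemma card_Sset_mul : ∀ (n : ℕ) (v : X → ℕ), (∑ a, v a) = n →
    (Sset n v).card * ∏ a, (v a)! = n ! := by
  intro n
  induction n with
  | zero =>
      intro v hv
      have hv0 : ∀ a, v a = 0 := by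
        intro a
        have := Finset.sum_eq_zero_iff.1 hv
        exact this a (mem_univ a)
      have h1 : Sset (X := X) 0 v = univ := by
        apply Finset.filter_true_of_mem
        intro y _
        funext a
        simp [cnt, hv0 a, Finset.filter_eq_empty_iff]
      rw [h1]
      simp [hv0, Finset.card_univ]
  | succ n ih =>
      intro v hv
      -- card recursion
      have hcard : (Sset (n+1) v).card
          = ∑ a : X, (if 0 < v a then (Sset n (fun b => v b - if a = b then 1 else 0)).card else 0) := by
        rw [Sset, Finset.card_filter]
        rw [← Fintype.sum_equiv (Fin.consEquiv (fun _ : Fin (n+1) => X))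
          (fun p => if cnt (Fin.cons p.1 p.2) = v then 1 else 0)
          (fun y => if cnt y = v then 1 else 0) (fun p => rfl)]
        rw [Fintype.sum_prod_type]
        refine Finset.sum_congr rfl fun a _ => ?_
        by_cases hva : 0 < v a
        · rw [if_pos hva, Sset, Finset.card_filter]
          refine Finset.sum_congr rfl fun z _ => ?_
          congr 1
          simp only [eq_iff_iff]
          constructor
          · intro h
            funext b
            have hb := congrFun h b
            rw [cnt_cons] at hb
            by_cases hab : a = b <;> simp [hab] at hb ⊢ <;> omega
          · intro h
            funext b
            have hb := congrFun h b
            rw [cnt_cons, hb]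
            by_cases hab : a = b <;> simp [hab] <;> subst hab <;> omega
        · rw [if_neg hva]
          apply Finset.sum_eq_zero
          intro z _
          rw [if_neg]
          intro h
          have hb := congrFun h a
          rw [cnt_cons, if_pos rfl] at hb
          omega
      rw [hcard, Finset.sum_mul]
      have hterm : ∀ a : X,
          (if 0 < v a then (Sset n (fun b => v b - if a = b then 1 else 0)).card else 0)
            * ∏ b, (v b)! = n ! * v a := by
        intro a
        by_cases hva : 0 < v a
        · rw [if_pos hva]
          set v' : X → ℕ := fun b => v b - if a = b then 1 else 0 with hv'
          have hsum' : ∑ b, v' b = n := by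
            have hpt : ∀ b, v b = v' b + (if a = b then 1 else 0) := by
              intro b
              by_cases hab : a = b
              · subst hab; simp [v']; omega
              · simp [v', hab]
            have h1 : ∑ b, v b = (∑ b, v' b) + ∑ b, (if a = b then 1 else 0) := by
              rw [← Finset.sum_add_distrib]
              exact Finset.sum_congr rfl fun b _ => hpt b
            have h2 : ∑ b : X, (if a = b then 1 else 0) = 1 := by simp
            omega
          have hfac : ∏ b, (v b)! = v a * ∏ b, (v' b)! := by
            rw [← Finset.mul_prod_erase univ _ (mem_univ a),
                ← Finset.mul_prod_erase univ (fun b => (v' b)!) (mem_univ a)]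
            have hva' : v' a = v a - 1 := by simp [v']
            have : (v a)! = v a * (v' a)! := by
              rw [hva']
              obtain ⟨w, hw⟩ : ∃ w, v a = w + 1 := ⟨v a - 1, by omega⟩
              rw [hw]
              simp [Nat.factorial_succ]
            rw [this]
            have herase : ∏ b ∈ univ.erase a, (v b)! = ∏ b ∈ univ.erase a, (v' b)! := by
              refine Finset.prod_congr rfl fun b hb => ?_
              have : a ≠ b := fun h => (Finset.mem_erase.1 hb).1 h.symm
              simp [v', this]
            rw [herase]
            ring
          rw [hfac, ← mul_assoc, mul_comm _ (v a), mul_assoc, ih v' hsum', mul_comm]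
        · rw [if_neg hva, zero_mul]
          have : v a = 0 := by omega
          rw [this, mul_zero]
      rw [Finset.sum_congr rfl (fun a _ => hterm a), ← Finset.mul_sum, hv,
        Nat.factorial_succ, mul_comm]

lemma fact_le_mul_pow (j : ℕ) : ∀ d : ℕ, (j + d)! ≤ j ! * (j + d) ^ d := by
  intro d
  induction d with
  | zero => simp
  | succ d ih =>
      have h1 : (j + (d+1))! = (j + d + 1) * (j + d)! := by
        rw [show j + (d+1) = (j + d) + 1 by omega, Nat.factorial_succ]
      rw [h1]
      calc (j + d + 1) * (j + d)! ≤ (j + d + 1) * (j ! * (j + d) ^ d) :=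
            Nat.mul_le_mul_left _ ih
        _ ≤ (j + d + 1) * (j ! * (j + d + 1) ^ d) := by
            exact Nat.mul_le_mul_left _ (Nat.mul_le_mul_left _ (Nat.pow_le_pow_left (by omega) d))
        _ = j ! * (j + (d+1)) ^ (d+1) := by ring_nf
  
lemma coord_ineq (n j : ℕ) : n ^ j * n ! ≤ n ^ n * j ! := by
  rcases le_total j n with h | h
  · obtain ⟨d, rfl⟩ : ∃ d, n = j + d := ⟨n - j, by omega⟩
    calc (j + d) ^ j * (j + d)! ≤ (j + d) ^ j * (j ! * (j + d) ^ d) :=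
          Nat.mul_le_mul_left _ (fact_le_mul_pow j d)
      _ = (j + d) ^ (j + d) * j ! := by rw [pow_add]; ring
  · obtain ⟨d, rfl⟩ : ∃ d, j = n + d := ⟨j - n, by omega⟩
    calc n ^ (n + d) * n ! = n ^ n * (n ^ d * n !) := by ring
      _ ≤ n ^ n * ((n+1) ^ d * n !) :=
          Nat.mul_le_mul_left _ (Nat.mul_le_mul_right _ (Nat.pow_le_pow_left (by omega) d))
      _ = n ^ n * (n ! * (n+1) ^ d) := by ring
      _ ≤ n ^ n * (n + d)! := Nat.mul_le_mul_left _ Nat.factorial_mul_pow_le_factorial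

lemma term_le_nat (n : ℕ) (c v : X → ℕ) (hc : ∑ a, c a = n) (hv : ∑ a, v a = n) :
    (Sset (X := X) n v).card * ∏ a, c a ^ v a ≤ (Sset (X := X) n c).card * ∏ a, c a ^ c a := by
  have hprodpos : 0 < (∏ a, (v a)!) * ∏ a, (c a)! :=
    Nat.mul_pos (Finset.prod_pos fun a _ => Nat.factorial_pos _)
      (Finset.prod_pos fun a _ => Nat.factorial_pos _)
  apply Nat.le_of_mul_le_mul_right _ hprodpos
  have hpt : ∏ a, ((c a)! * c a ^ v a) ≤ ∏ a, ((v a)! * c a ^ c a) :=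
    Finset.prod_le_prod' fun a _ => by
      have := coord_ineq (c a) (v a)
      calc (c a)! * c a ^ v a = c a ^ v a * (c a)! := by ring
        _ ≤ c a ^ c a * (v a)! := this
        _ = (v a)! * c a ^ c a := by ring
  calc (Sset (X := X) n v).card * (∏ a, c a ^ v a) * ((∏ a, (v a)!) * ∏ a, (c a)!)
      = ((Sset (X := X) n v).card * ∏ a, (v a)!) * (∏ a, ((c a)! * c a ^ v a)) := by
        rw [Finset.prod_mul_distrib]; ring
    _ = n ! * ∏ a, ((c a)! * c a ^ v a) := by rw [card_Sset_mul n v hv]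
    _ ≤ n ! * ∏ a, ((v a)! * c a ^ c a) := Nat.mul_le_mul_left _ hpt
    _ = ((Sset (X := X) n c).card * ∏ a, (c a)!) * ∏ a, ((v a)! * c a ^ c a) := by
        rw [card_Sset_mul n c hc]
    _ = (Sset (X := X) n c).card * (∏ a, c a ^ c a) * ((∏ a, (v a)!) * ∏ a, (c a)!) := by
        rw [Finset.prod_mul_distrib]; ring

lemma term_le_real (n : ℕ) (hn : 0 < n) (c v : X → ℕ) (hc : ∑ a, c a = n) (hv : ∑ a, v a = n) :
    ((Sset (X := X) n v).card : ℝ) * ∏ a, ((c a : ℝ)/n) ^ v a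
      ≤ ((Sset (X := X) n c).card : ℝ) * ∏ a, ((c a : ℝ)/n) ^ c a := by
  have hrw : ∀ w : X → ℕ, (∑ a, w a) = n →
      (∏ a, ((c a : ℝ)/n) ^ w a) = (∏ a, (c a : ℝ) ^ w a) / (n : ℝ) ^ n := by
    intro w hw
    rw [Finset.prod_congr rfl (fun a _ => div_pow (c a : ℝ) (n : ℝ) (w a)),
      Finset.prod_div_distrib, Finset.prod_pow_eq_pow_sum, hw]
  rw [hrw v hv, hrw c hc, ← mul_div_assoc, ← mul_div_assoc]
  refine div_le_div_of_nonneg_right ?_ (by positivity) |>.trans_eq rfl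
  exact_mod_cast term_le_nat n c v hc hv

lemma Sset_card_eq_one (c : X → ℕ) (h : ∑ a, c a = 0) : (Sset (X := X) 0 c).card = 1 := by
  have := card_Sset_mul 0 c h
  rw [Nat.factorial_zero] at this
  exact Nat.eq_one_of_mul_eq_one_right this

lemma key_bound (n : ℕ) (Q p : X → ℝ) (hQ0 : ∀ a, 0 ≤ Q a) (hp0 : ∀ a, 0 ≤ p a)
    (hp1 : ∑ a, p a = 1) (c : X → ℕ) (hc : ∀ a, (n : ℝ) * p a = c a)
    (hQpos : ∀ a, 0 < c a → 0 < Q a) :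
    Real.exp (-((n : ℝ) * ∑ a, p a * Real.log (p a / Q a))) / ((n : ℝ) + 1) ^ (Fintype.card X)
      ≤ ((Sset (X := X) n c).card : ℝ) * ∏ a, Q a ^ c a := by
  rcases Nat.eq_zero_or_pos n with hn | hn
  · subst hn
    have hc0 : ∀ a, c a = 0 := by
      intro a
      have := hc a
      simp at this
      exact_mod_cast this.symm
    have hs : ∑ a, c a = 0 := Finset.sum_eq_zero fun a _ => hc0 a
    rw [Sset_card_eq_one c hs]
    simp [hc0]
  · have hnR : (0 : ℝ) < n := by exact_mod_cast hn
    have hsumc : ∑ a, c a = n := by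
      have : ((∑ a, c a : ℕ) : ℝ) = (n : ℝ) := by
        push_cast
        rw [Finset.sum_congr rfl (fun a _ => (hc a).symm), ← Finset.mul_sum, hp1, mul_one]
      exact_mod_cast this
    have hpc : ∀ a, p a = (c a : ℝ) / n := fun a => by
      field_simp
      linarith [hc a]
    -- Step A
    set M : ℝ := ((Sset (X := X) n c).card : ℝ) * ∏ a, p a ^ c a with hM
    have hMnonneg : 0 ≤ M := by
      apply mul_nonneg (Nat.cast_nonneg _)
      exact Finset.prod_nonneg fun a _ => pow_nonneg (hp0 a) _
    have hstepA : 1 ≤ ((n : ℝ) + 1) ^ (Fintype.card X) * M := by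
      have h1 : (1 : ℝ) = ∑ y : Fin n → X, ∏ i, p (y i) := by
        have := Finset.prod_univ_sum (fun _ : Fin n => (univ : Finset X)) (fun _ a => p a)
        rw [Fintype.piFinset_univ] at this
        rw [← this, Finset.prod_congr rfl fun i _ => hp1, Finset.prod_const, one_pow]
      have h2 : ∑ y : Fin n → X, ∏ i, p (y i)
          = ∑ v ∈ Fintype.piFinset (fun _ : X => Finset.range (n+1)),
              ∑ y ∈ Sset (X := X) n v, ∏ a, p a ^ (v a) := by
        rw [← Finset.sum_fiberwise_of_maps_to (g := fun y : Fin n → X => cnt y)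
          (t := Fintype.piFinset (fun _ : X => Finset.range (n+1)))
          (fun y _ => by
            rw [Fintype.mem_piFinset]
            intro a
            rw [Finset.mem_range]
            exact Nat.lt_succ_of_le (cnt_le y a))]
        refine Finset.sum_congr rfl fun v _ => ?_
        refine Finset.sum_congr rfl fun y hy => ?_
        have hcv : cnt y = v := (Finset.mem_filter.1 hy).2
        rw [prod_comp_cnt, hcv]
      have h3 : ∀ v ∈ Fintype.piFinset (fun _ : X => Finset.range (n+1)),
          ∑ y ∈ Sset (X := X) n v, ∏ a, p a ^ (v a) ≤ M := by
        intro v _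
        rw [Finset.sum_const, nsmul_eq_mul]
        by_cases hsv : ∑ a, v a = n
        · rw [hM]
          have := term_le_real n hn c v hsumc hsv
          calc ((Sset (X := X) n v).card : ℝ) * ∏ a, p a ^ v a
              = ((Sset (X := X) n v).card : ℝ) * ∏ a, ((c a : ℝ)/n) ^ v a := by
                congr 1
                exact Finset.prod_congr rfl fun a _ => by rw [hpc a]
            _ ≤ ((Sset (X := X) n c).card : ℝ) * ∏ a, ((c a : ℝ)/n) ^ c a := this
            _ = ((Sset (X := X) n c).card : ℝ) * ∏ a, p a ^ c a := by
                congr 1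
                exact Finset.prod_congr rfl fun a _ => (by rw [hpc a] : p a ^ c a = ((c a : ℝ)/n) ^ c a).symm
        · have : Sset (X := X) n v = ∅ := by
            rw [Finset.eq_empty_iff_forall_notMem]
            intro y hy
            have hcv : cnt y = v := (Finset.mem_filter.1 hy).2
            exact hsv (by rw [← hcv]; exact sum_cnt y)
          rw [this]
          simpa using hMnonneg
      calc (1:ℝ) = ∑ y : Fin n → X, ∏ i, p (y i) := h1
        _ = _ := h2
        _ ≤ ∑ v ∈ Fintype.piFinset (fun _ : X => Finset.range (n+1)), M :=
            Finset.sum_le_sum h3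
        _ = ((Fintype.piFinset (fun _ : X => Finset.range (n+1))).card : ℝ) * M := by
            rw [Finset.sum_const, nsmul_eq_mul]
        _ = ((n : ℝ) + 1) ^ (Fintype.card X) * M := by
            rw [Fintype.card_piFinset]
            push_cast
            simp
    -- Step B
    have hstepB : ∏ a, Q a ^ c a
        = Real.exp (-((n : ℝ) * ∑ a, p a * Real.log (p a / Q a))) * ∏ a, p a ^ c a := by
      have hpt : ∀ a, Q a ^ c a
          = Real.exp (-((c a : ℝ) * Real.log (p a / Q a))) * p a ^ c a := by
        intro a
        rcases Nat.eq_zero_or_pos (c a) with h0 | h0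
        · simp [h0]
        · have hQa : 0 < Q a := hQpos a h0
          have hpa : 0 < p a := by
            rw [hpc a]
            apply div_pos (by exact_mod_cast h0) hnR
          have hLexp : Real.exp (-Real.log (p a / Q a)) = Q a / p a := by
            rw [Real.exp_neg, Real.exp_log (div_pos hpa hQa), inv_div]
          calc Q a ^ c a = (Q a / p a * p a) ^ c a := by
                rw [div_mul_cancel₀ _ (ne_of_gt hpa)]
            _ = (Q a / p a) ^ c a * p a ^ c a := mul_pow _ _ _
            _ = Real.exp (-((c a : ℝ) * Real.log (p a / Q a))) * p a ^ c a := by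
                rw [← hLexp, ← Real.exp_nat_mul]
                ring_nf
      rw [Finset.prod_congr rfl fun a _ => hpt a, Finset.prod_mul_distrib, ← Real.exp_sum]
      congr 2
      rw [Finset.mul_sum, ← Finset.sum_neg_distrib]
      refine Finset.sum_congr rfl fun a _ => ?_
      rw [← hc a]
      ring
    -- combine
    rw [hstepB, ← mul_assoc, mul_comm (((Sset (X := X) n c).card : ℝ)) _, mul_assoc, ← hM]
    rw [div_le_iff₀ (by positivity)]
    set E := Real.exp (-((n : ℝ) * ∑ a, p a * Real.log (p a / Q a))) with hE
    calc E = E * 1 := (mul_one _).symm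
      _ ≤ E * (((n : ℝ) + 1) ^ (Fintype.card X) * M) :=
          mul_le_mul_of_nonneg_left hstepA (Real.exp_nonneg _)
      _ = E * M * ((n : ℝ) + 1) ^ (Fintype.card X) := by ring

lemma fin_split_prod {M : Type*} [CommMonoid M] (k m : ℕ) (hm : m ≤ k) (F : Fin k → M) :
    ∏ i, F i = (∏ j : Fin m, F ⟨j, lt_of_lt_of_le j.2 hm⟩)
      * ∏ j : Fin (k-m), F ⟨m + (j : ℕ), by omega⟩ := by
  rw [← Finset.prod_filter_mul_prod_filter_not univ (fun i : Fin k => (i : ℕ) < m) F]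
  congr 1
  · refine Finset.prod_bij' (i := fun (i : Fin k) (hi : i ∈ filter (fun i : Fin k => (i : ℕ) < m) univ) =>
        (⟨(i : ℕ), (mem_filter.1 hi).2⟩ : Fin m))
      (j := fun (j : Fin m) (_ : j ∈ univ) => (⟨(j : ℕ), lt_of_lt_of_le j.2 hm⟩ : Fin k))
      (fun i hi => mem_univ _) (fun j _ => mem_filter.2 ⟨mem_univ _, j.2⟩)
      (fun i hi => Fin.ext rfl) (fun j _ => Fin.ext rfl)
      (fun i hi => by congr 1)
  · refine Finset.prod_bij' (i := fun (i : Fin k) (hi : i ∈ filter (fun i : Fin k => ¬ (i : ℕ) < m) univ) =>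
        (⟨(i : ℕ) - m, by have h1 := (mem_filter.1 hi).2; have := i.2; omega⟩ : Fin (k - m)))
      (j := fun (j : Fin (k - m)) (_ : j ∈ univ) => (⟨m + (j : ℕ), by have := j.2; omega⟩ : Fin k))
      (fun i hi => mem_univ _)
      (fun j _ => mem_filter.2 ⟨mem_univ _, by simp⟩)
      (fun i hi => Fin.ext (by have h1 := (mem_filter.1 hi).2; simp at h1 ⊢; omega))
      (fun j _ => Fin.ext (by simp))
      (fun i hi => by
        congr 1
        exact Fin.ext (by have h1 := (mem_filter.1 hi).2; simp at h1 ⊢; omega))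
lemma fin_split_sum {M : Type*} [AddCommMonoid M] (k m : ℕ) (hm : m ≤ k) (F : Fin k → M) :
    ∑ i, F i = (∑ j : Fin m, F ⟨j, lt_of_lt_of_le j.2 hm⟩)
      + ∑ j : Fin (k-m), F ⟨m + (j : ℕ), by omega⟩ :=
  fin_split_prod (M := Multiplicative M) k m hm F

lemma glue_bound (Q Q' : X → ℝ) (hQ0 : ∀ a, 0 ≤ Q a) (hQ'0 : ∀ a, 0 ≤ Q' a)
    (k m : ℕ) (hk : 1 ≤ k) (hm : m ≤ k) (c₁ c₂ : X → ℕ) (P : X → ℝ)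
    (hP : ∀ a, (k : ℝ) * P a = (c₁ a : ℝ) + (c₂ a : ℝ)) :
    ((Sset (X := X) m c₁).card : ℝ) * (∏ a, Q a ^ c₁ a)
      * (((Sset (X := X) (k-m) c₂).card : ℝ) * ∏ a, Q' a ^ c₂ a)
    ≤ ∑ x : Fin k → X,
        if ∀ a, (((Finset.univ.filter fun i => x i = a).card : ℝ) / k = P a)
        then ∏ i : Fin k, (if (i : ℕ) < m then Q (x i) else Q' (x i)) else 0 := by
  classical
  set T : (Fin k → X) → ℝ := fun x =>
    if ∀ a, (((Finset.univ.filter fun i => x i = a).card : ℝ) / k = P a)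
    then ∏ i : Fin k, (if (i : ℕ) < m then Q (x i) else Q' (x i)) else 0 with hT
  have hTnonneg : ∀ x, 0 ≤ T x := by
    intro x
    rw [hT]
    dsimp only
    split_ifs
    · exact Finset.prod_nonneg fun i _ => by split_ifs; exacts [hQ0 _, hQ'0 _]
    · exact le_rfl
  set g : (Fin m → X) × (Fin (k-m) → X) → (Fin k → X) :=
    fun p => fun i => if h : (i : ℕ) < m then p.1 ⟨i, h⟩
      else p.2 ⟨(i : ℕ) - m, by have := i.2; omega⟩ with hg
  have hg1 : ∀ p (j : Fin m), g p ⟨(j : ℕ), lt_of_lt_of_le j.2 hm⟩ = p.1 j := by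
    intro p j
    simp only [hg]
    rw [dif_pos j.2]
  have hg2 : ∀ p (j : Fin (k-m)), g p ⟨m + (j : ℕ), by have := j.2; omega⟩ = p.2 j := by
    intro p j
    simp only [hg]
    rw [dif_neg (by omega)]
    simp only [Fin.val_mk, Nat.add_sub_cancel_left]
  have hinj : Function.Injective g := by
    intro p q h
    have h1 : p.1 = q.1 := funext fun j => by rw [← hg1 p j, ← hg1 q j, h]
    have h2 : p.2 = q.2 := funext fun j => by rw [← hg2 p j, ← hg2 q j, h]
    exact Prod.ext h1 h2
  have hcnt : ∀ p a, cnt (g p) a = cnt p.1 a + cnt p.2 a := by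
    intro p a
    simp only [cnt, Finset.card_filter]
    rw [fin_split_sum k m hm (fun i => if g p i = a then 1 else 0)]
    congr 1
    · exact Finset.sum_congr rfl fun j _ => by rw [hg1 p j]
    · exact Finset.sum_congr rfl fun j _ => by rw [hg2 p j]
  have hprod : ∀ p, (∏ i : Fin k, if (i : ℕ) < m then Q (g p i) else Q' (g p i))
      = (∏ a, Q a ^ cnt p.1 a) * ∏ a, Q' a ^ cnt p.2 a := by
    intro p
    rw [fin_split_prod k m hm]
    congr 1
    · rw [← prod_comp_cnt p.1 Q]
      refine Finset.prod_congr rfl fun j _ => ?_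
      have hlt : ((⟨(j : ℕ), lt_of_lt_of_le j.2 hm⟩ : Fin k) : ℕ) < m := j.2
      rw [if_pos hlt, hg1 p j]
    · rw [← prod_comp_cnt p.2 Q']
      refine Finset.prod_congr rfl fun j _ => ?_
      have hlt : ¬ ((⟨m + (j : ℕ), by have := j.2; omega⟩ : Fin k) : ℕ) < m := by
        simp
      rw [if_neg hlt, hg2 p j]
  have hval : ∀ p ∈ (Sset (X := X) m c₁) ×ˢ (Sset (X := X) (k-m) c₂),
      T (g p) = (∏ a, Q a ^ c₁ a) * ∏ a, Q' a ^ c₂ a := by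
    intro p hp
    obtain ⟨hp1, hp2⟩ := Finset.mem_product.1 hp
    have hc1 : cnt p.1 = c₁ := (Finset.mem_filter.1 hp1).2
    have hc2 : cnt p.2 = c₂ := (Finset.mem_filter.1 hp2).2
    have hcond : ∀ a, (((Finset.univ.filter fun i => g p i = a).card : ℝ) / k = P a) := by
      intro a
      have h0 : (Finset.univ.filter fun i => g p i = a).card = cnt (g p) a := rfl
      rw [h0, hcnt p a, hc1, hc2]
      have hk0 : (k : ℝ) ≠ 0 := by
        have : (0:ℝ) < k := by exact_mod_cast hk
        linarith
      rw [div_eq_iff hk0]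
      push_cast
      linarith [hP a]
    rw [hT]
    dsimp only
    rw [if_pos hcond, hprod p, hc1, hc2]
  calc ((Sset (X := X) m c₁).card : ℝ) * (∏ a, Q a ^ c₁ a)
        * (((Sset (X := X) (k-m) c₂).card : ℝ) * ∏ a, Q' a ^ c₂ a)
      = ∑ p ∈ (Sset (X := X) m c₁) ×ˢ (Sset (X := X) (k-m) c₂), T (g p) := by
        rw [Finset.sum_congr rfl hval, Finset.sum_const, Finset.card_product, nsmul_eq_mul]
        push_cast
        ring
    _ = ∑ x ∈ ((Sset (X := X) m c₁) ×ˢ (Sset (X := X) (k-m) c₂)).image g, T x :=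
        (Finset.sum_image (fun p _ q _ h => hinj h)).symm
    _ ≤ ∑ x : Fin k → X, T x :=
        Finset.sum_le_sum_of_subset_of_nonneg (Finset.subset_univ _) (fun x _ _ => hTnonneg x)

lemma KLdivE_ne_bot (p q : X → ℝ) : KLdivE p q ≠ ⊥ := by
  rw [KLdivE]
  split_ifs
  · simp
  · exact EReal.coe_ne_bot _

lemma mul_KL_ne_bot (t : ℝ) (ht : 0 ≤ t) (v : EReal) (hv : v ≠ ⊥) :
    (t : EReal) * v ≠ ⊥ := by
  rcases eq_or_lt_of_le ht with h | h
  · rw [← h]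
    simp
  · induction v using EReal.rec with
    | bot => exact absurd rfl hv
    | coe x =>
        rw [← EReal.coe_mul]
        exact EReal.coe_ne_bot _
    | top =>
        rw [EReal.coe_mul_top_of_pos h]
        simp

lemma block_bound (n : ℕ) (Q p : X → ℝ) (hQ : IsPMF Q) (hp : IsPMF p)
    (c : X → ℕ) (hc : ∀ a, (n : ℝ) * p a = c a)
    (hKL : KLdivE p Q ≠ ⊤ ∨ n = 0) :
    ∃ s : ℝ, ((n : ℝ) : EReal) * KLdivE p Q = (s : EReal) ∧
      Real.exp (-s) / ((n : ℝ) + 1) ^ (Fintype.card X)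
        ≤ ((Sset (X := X) n c).card : ℝ) * ∏ a, Q a ^ c a := by
  by_cases htop : KLdivE p Q = ⊤
  · have hn : n = 0 := by tauto
    subst hn
    refine ⟨0, by simp [htop], ?_⟩
    have hc0 : ∀ a, c a = 0 := by
      intro a
      have := hc a
      simp at this
      exact_mod_cast this.symm
    have hs : ∑ a, c a = 0 := Finset.sum_eq_zero fun a _ => hc0 a
    rw [Sset_card_eq_one c hs]
    simp [hc0]
  · have hne : ¬∃ x, 0 < p x ∧ Q x = 0 := by
      intro h
      exact htop (by rw [KLdivE, if_pos h])
    have hKLeq : KLdivE p Q = ((∑ a, p a * Real.log (p a / Q a) : ℝ) : EReal) := by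
      rw [KLdivE, if_neg hne]
    have hQpos : ∀ a, 0 < c a → 0 < Q a := by
      intro a hca
      have hpa : 0 < p a := by
        rcases lt_or_eq_of_le (hp.1 a) with h | h
        · exact h
        · exfalso
          have := hc a
          rw [← h, mul_zero] at this
          have : c a = 0 := by exact_mod_cast this.symm
          omega
      rcases lt_or_eq_of_le (hQ.1 a) with h | h
      · exact h
      · exact absurd ⟨hpa, h.symm⟩ (not_exists.1 hne a)
    exact ⟨(n : ℝ) * ∑ a, p a * Real.log (p a / Q a),
      by rw [hKLeq, ← EReal.coe_mul],
      key_bound n Q p hQ.1 hp.1 hp.2 c hc hQpos⟩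


end Aux

/-- Lower bound on the probability that a sequence of `k` independent symbols,
the first `m` distributed according to `Q` and the rest according to `Q'`, has empirical
distribution exactly `P`, where `k·P = m·P₁ + (k−m)·P₂` for an `m`-type `P₁` and a
`(k−m)`-type `P₂`:
`ℙ(type = P) ≥ (k+1)^{−2|𝒳|} · exp(−(m·D(P₁‖Q) + (k−m)·D(P₂‖Q')))`.
(The bound is stated for every real `r ≥ m·D(P₁‖Q) + (k−m)·D(P₂‖Q')`, which is equivalent;
when the exponent is infinite the claim is vacuous, matching the convention that the
right-hand side is then `0`.) -/
theorem type_prob_lower_bound {X : Type*} [Fintype X] [DecidableEq X]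
    (Q Q' : X → ℝ) (hQ : IsPMF Q) (hQ' : IsPMF Q')
    (k m : ℕ) (hk : 1 ≤ k) (hm : m ≤ k)
    (P₁ P₂ P : X → ℝ) (hP₁ : IsPMF P₁) (hP₂ : IsPMF P₂) (hP : IsPMF P)
    (htype₁ : ∀ a, ∃ c : ℕ, (m : ℝ) * P₁ a = c)
    (htype₂ : ∀ a, ∃ c : ℕ, ((k - m : ℕ) : ℝ) * P₂ a = c)
    (hPdef : ∀ a, (k : ℝ) * P a = (m : ℝ) * P₁ a + ((k - m : ℕ) : ℝ) * P₂ a) :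
    ∀ r : ℝ,
      ((m : ℝ) : EReal) * KLdivE P₁ Q + (((k - m : ℕ) : ℝ) : EReal) * KLdivE P₂ Q'
        ≤ (r : EReal) →
      (∑ x : Fin k → X,
        if ∀ a, (((Finset.univ.filter fun i => x i = a).card : ℝ) / k = P a)
        then ∏ i : Fin k, (if (i : ℕ) < m then Q (x i) else Q' (x i)) else 0)
      ≥ Real.exp (-r) / ((k : ℝ) + 1) ^ (2 * Fintype.card X) := by
  classical
  intro r hr
  choose c₁ hc₁ using htype₁
  choose c₂ hc₂ using htype₂
  have h₁ : KLdivE P₁ Q ≠ ⊤ ∨ m = 0 := by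
    rcases Nat.eq_zero_or_pos m with h | h
    · exact Or.inr h
    · left
      intro htop
      rw [htop, EReal.coe_mul_top_of_pos (by exact_mod_cast h : (0:ℝ) < (m:ℝ)),
        EReal.top_add_of_ne_bot
          (mul_KL_ne_bot _ (Nat.cast_nonneg _) _ (KLdivE_ne_bot _ _))] at hr
      exact absurd hr (not_le.2 (EReal.coe_lt_top r))
  have h₂ : KLdivE P₂ Q' ≠ ⊤ ∨ (k - m) = 0 := by
    rcases Nat.eq_zero_or_pos (k - m) with h | h
    · exact Or.inr h
    · left
      intro htop
      rw [htop, EReal.coe_mul_top_of_pos (by exact_mod_cast h : (0:ℝ) < ((k - m : ℕ):ℝ)),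
        EReal.add_top_of_ne_bot
          (mul_KL_ne_bot _ (Nat.cast_nonneg _) _ (KLdivE_ne_bot _ _))] at hr
      exact absurd hr (not_le.2 (EReal.coe_lt_top r))
  obtain ⟨s₁, hs₁eq, hs₁⟩ := block_bound m Q P₁ hQ hP₁ c₁ hc₁ h₁
  obtain ⟨s₂, hs₂eq, hs₂⟩ := block_bound (k - m) Q' P₂ hQ' hP₂ c₂ hc₂ h₂
  have hsum : s₁ + s₂ ≤ r := by
    rw [hs₁eq, hs₂eq, ← EReal.coe_add] at hr
    exact EReal.coe_le_coe_iff.1 hr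
  rw [ge_iff_le]
  have hglue := glue_bound Q Q' hQ.1 hQ'.1 k m hk hm c₁ c₂ P
    (fun a => by rw [hPdef a, hc₁ a, hc₂ a])
  refine le_trans ?_ hglue
  have hnn₂ : (0:ℝ) ≤ Real.exp (-s₂) / (((k - m : ℕ) : ℝ) + 1) ^ (Fintype.card X) := by
    positivity
  have hnn₁ : (0:ℝ) ≤ ((Sset (X := X) m c₁).card : ℝ) * ∏ a, Q a ^ c₁ a :=
    le_trans (by positivity) hs₁
  have hmul := mul_le_mul hs₁ hs₂ hnn₂ hnn₁
  refine le_trans ?_ hmul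
  have hsplit : Real.exp (-(s₁ + s₂))
        / (((m : ℝ) + 1) ^ (Fintype.card X) * (((k - m : ℕ) : ℝ) + 1) ^ (Fintype.card X))
      = Real.exp (-s₁) / ((m : ℝ) + 1) ^ (Fintype.card X)
        * (Real.exp (-s₂) / (((k - m : ℕ) : ℝ) + 1) ^ (Fintype.card X)) := by
    rw [neg_add, Real.exp_add, _root_.div_mul_div_comm]
  rw [← hsplit]
  have hkm : ((k - m : ℕ) : ℝ) ≤ (k : ℝ) := by
    exact_mod_cast Nat.sub_le k m
  have hmk : (m : ℝ) ≤ (k : ℝ) := by exact_mod_cast hm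
  have hm0 : (0:ℝ) ≤ (m : ℝ) := Nat.cast_nonneg _
  have hkm0 : (0:ℝ) ≤ ((k - m : ℕ) : ℝ) := Nat.cast_nonneg _
  apply div_le_div₀ (Real.exp_nonneg _)
  · exact Real.exp_le_exp.2 (by linarith)
  · positivity
  ·  calc ((m:ℝ) + 1) ^ (Fintype.card X) * (((k - m : ℕ):ℝ) + 1) ^ (Fintype.card X)
        = (((m:ℝ) + 1) * (((k - m : ℕ):ℝ) + 1)) ^ (Fintype.card X) := (mul_pow _ _ _).symm
      _ ≤ (((k:ℝ) + 1) ^ 2) ^ (Fintype.card X) := by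
          apply pow_le_pow_left₀ (by positivity)
          nlinarith
      _ = ((k:ℝ) + 1) ^ (2 * Fintype.card X) := by rw [← _root_.pow_mul]
end

section
/- Let α > 1 be a real number. For every β ∈ [0,1] with (α−1)·β ≤ 1, the inequality (α−1)·h(β) + h((α−1)·β) ≤ α·h(1/α) holds, with equality if and only if β = 1/α. Here h is the binary entropy function. -/
/-- Strict Gibbs inequality: for `p ∈ [0,1]`, `q ∈ (0,1)`, `p ≠ q`,
`h(p) < -p log q - (1-p) log (1-q)`. -/
lemma gibbs_lt {p q : ℝ} (hp0 : 0 ≤ p) (hp1 : p ≤ 1) (hq0 : 0 < q) (hq1 : q < 1)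
    (hne : p ≠ q) :
    binEnt p < -(p * Real.log q) - (1 - p) * Real.log (1 - q) := by
  rcases eq_or_lt_of_le hp0 with h0 | h0
  · simp only [binEnt, ← h0]
    have hl : Real.log (1 - q) < 0 :=
      Real.log_neg (by linarith) (by linarith)
    simp
    nlinarith
  rcases eq_or_lt_of_le hp1 with h1 | h1
  · simp only [binEnt, h1]
    have hl : Real.log q < 0 := Real.log_neg hq0 hq1
    simp
    nlinarith
  · have hq' : 0 < 1 - q := by linarith
    have hp' : 0 < 1 - p := by linarith
    have hA : Real.log (q / p) < q / p - 1 := by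
      refine Real.log_lt_sub_one_of_pos (div_pos hq0 h0) ?_
      intro h
      apply hne
      field_simp at h
      linarith
    have hB : Real.log ((1 - q) / (1 - p)) ≤ (1 - q) / (1 - p) - 1 :=
      Real.log_le_sub_one_of_pos (div_pos hq' hp')
    rw [Real.log_div hq0.ne' h0.ne'] at hA
    rw [Real.log_div hq'.ne' hp'.ne'] at hB
    have hA' : p * (Real.log q - Real.log p) < q - p := by
      have h := mul_lt_mul_of_pos_left hA h0
      have he : p * (q / p - 1) = q - p := by field_simp
      linarith
    have hB' : (1 - p) * (Real.log (1 - q) - Real.log (1 - p)) ≤ p - q := by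
      have h := mul_le_mul_of_nonneg_left hB hp'.le
      have he : (1 - p) * ((1 - q) / (1 - p) - 1) = p - q := by field_simp; ring
      linarith
    simp only [binEnt]
    nlinarith [hA', hB']

/-- Gibbs inequality. -/
lemma gibbs_le {p q : ℝ} (hp0 : 0 ≤ p) (hp1 : p ≤ 1) (hq0 : 0 < q) (hq1 : q < 1) :
    binEnt p ≤ -(p * Real.log q) - (1 - p) * Real.log (1 - q) := by
  rcases eq_or_ne p q with h | h
  · subst h; exact le_of_eq rfl
  · exact (gibbs_lt hp0 hp1 hq0 hq1 h).le

/-- For `α > 1` and `β ∈ [0,1]` with `(α−1)β ≤ 1`,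
`(α−1)·h(β) + h((α−1)β) ≤ α·h(1/α)`, with equality iff `β = 1/α`. -/
theorem entropy_combination_le (α : ℝ) (hα : 1 < α)
    (β : ℝ) (hβ : β ∈ Set.Icc (0 : ℝ) 1) (hβ' : (α - 1) * β ≤ 1) :
    (α - 1) * binEnt β + binEnt ((α - 1) * β) ≤ α * binEnt (1 / α) ∧
    ((α - 1) * binEnt β + binEnt ((α - 1) * β) = α * binEnt (1 / α) ↔ β = 1 / α) := by
  obtain ⟨hβ0, hβ1⟩ := hβ
  have hα0 : (0:ℝ) < α := by linarith
  have hq0 : (0:ℝ) < 1 / α := by positivity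
  have hq1 : 1 / α < 1 := by rw [div_lt_one hα0]; linarith
  have hγ0 : 0 ≤ (α - 1) * β := by nlinarith
  have hq'0 : (0:ℝ) < 1 - 1 / α := by linarith
  have hq'1 : 1 - 1 / α < 1 := by linarith
  have htarget : α * binEnt (1 / α)
      = -Real.log (1 / α) - (α - 1) * Real.log (1 - 1 / α) := by
    simp only [binEnt]
    field_simp
  have G1 : binEnt β ≤ -(β * Real.log (1 / α)) - (1 - β) * Real.log (1 - 1 / α) :=
    gibbs_le hβ0 hβ1 hq0 hq1
  have G2 : binEnt ((α - 1) * β) ≤ -(((α - 1) * β) * Real.log (1 - 1 / α))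
      - (1 - (α - 1) * β) * Real.log (1 / α) := by
    have h := gibbs_le hγ0 hβ' hq'0 hq'1
    rw [show (1:ℝ) - (1 - 1 / α) = 1 / α by ring] at h
    exact h
  have hring : (α - 1) * (-(β * Real.log (1 / α)) - (1 - β) * Real.log (1 - 1 / α))
      + (-(((α - 1) * β) * Real.log (1 - 1 / α)) - (1 - (α - 1) * β) * Real.log (1 / α))
      = -Real.log (1 / α) - (α - 1) * Real.log (1 - 1 / α) := by ring
  have h1 : (α - 1) * binEnt β
      ≤ (α - 1) * (-(β * Real.log (1 / α)) - (1 - β) * Real.log (1 - 1 / α)) :=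
    mul_le_mul_of_nonneg_left G1 (by linarith)
  constructor
  · linarith
  constructor
  · intro heq
    by_contra hne
    have hstrict : binEnt β < -(β * Real.log (1 / α)) - (1 - β) * Real.log (1 - 1 / α) :=
      gibbs_lt hβ0 hβ1 hq0 hq1 hne
    have h1' : (α - 1) * binEnt β
        < (α - 1) * (-(β * Real.log (1 / α)) - (1 - β) * Real.log (1 - 1 / α)) :=
      mul_lt_mul_of_pos_left hstrict (by linarith)
    linarith
  · intro hb
    subst hb
    rw [show (α - 1) * (1 / α) = 1 - 1 / α by field_simp]
    simp only [binEnt]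
    rw [show (1:ℝ) - (1 - 1 / α) = 1 / α by ring]
    field_simp
    ring
end
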